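/- arXiv:1401.1434 — 6 statements merged into one kernel-verified Lean document; each statement's English description precedes it below -/
import Mathlib

section
/- Let p ∈ ℕ with p ≥ 1 and k ∈ ℕ. For each i ∈ {1,…,k} let P_i, Q_i ⊆ ℝ² be nonempty compact convex sets (polytopes) with Q_i ⊆ P_i, and let P := P_1 × ⋯ × P_k and Q := Q_1 × ⋯ × Q_k, viewed as subsets of ℝ^{2k} equipped with the ℓ_p-norm. Then δ_p(P,Q)^p = Σ_{i=1}^k δ_p(P_i,Q_i)^p, where on each factor ℝ² the ℓ_p-norm is used as well. -/
open scoped ENNReal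

/-!
Since `Q ⊆ P`, the Hausdorff distance `δ(P, Q)` is the largest distance `d(x, Q)` from a point
`x ∈ P` to `Q`, and by compactness it is attained. In an `ℓ_p` product of compact boxes the
nearest point of `Q` to `x` can be chosen coordinatewise, so `d(x, Q)^p = ∑ i, d(xᵢ, Qᵢ)^p`;
maximizing this over `x ∈ P` is again done coordinatewise and gives `∑ i, δ(Pᵢ, Qᵢ)^p`.
-/

open Metric

section

variable {α : Type*} [PseudoMetricSpace α] {s t : Set α}

theorem Metric.hausdorffDist_le_of_subset_of_forall_infDist_le {r : ℝ} (hr : 0 ≤ r)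
    (hts : t ⊆ s) (h : ∀ x ∈ s, infDist x t ≤ r) : hausdorffDist s t ≤ r :=
  hausdorffDist_le_of_infDist hr h fun y hy => by rwa [infDist_zero_of_mem (hts hy)]

theorem IsCompact.hausdorffEDist_ne_top_of_subset (hs : IsCompact s) (ht : t.Nonempty)
    (hts : t ⊆ s) : hausdorffEDist s t ≠ ⊤ :=
  hausdorffEDist_ne_top_of_nonempty_of_bounded (ht.mono hts) ht hs.isBounded
    (hs.isBounded.subset hts)

theorem IsCompact.exists_infDist_eq_hausdorffDist_of_subset (hs : IsCompact s)
    (ht : t.Nonempty) (hts : t ⊆ s) : ∃ x ∈ s, infDist x t = hausdorffDist s t := by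
  obtain ⟨x, hx, hmax⟩ :=
    hs.exists_isMaxOn (ht.mono hts) (continuous_infDist_pt t).continuousOn
  refine ⟨x, hx, le_antisymm
    (infDist_le_hausdorffDist_of_mem hx (hs.hausdorffEDist_ne_top_of_subset ht hts)) ?_⟩
  exact hausdorffDist_le_of_subset_of_forall_infDist_le infDist_nonneg hts fun y hy => hmax hy

end

namespace PiLp

theorem isCompact_setOf_forall_mem {p : ℝ≥0∞} {ι : Type*} {β : ι → Type*}
    [∀ i, TopologicalSpace (β i)] {s : ∀ i, Set (β i)} (hs : ∀ i, IsCompact (s i)) :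
    IsCompact {x : PiLp p β | ∀ i, x i ∈ s i} := by
  convert (homeomorph p β).isCompact_preimage.2 (isCompact_univ_pi hs) using 1
  ext x
  simp [homeomorph]

variable {p : ℕ} [Fact (1 ≤ (p : ℝ≥0∞))] {ι : Type*} [Fintype ι] {β : ι → Type*}
  [∀ i, PseudoMetricSpace (β i)]

theorem dist_pow_eq_sum (x y : PiLp p β) : dist x y ^ p = ∑ i, dist (x i) (y i) ^ p := by
  have hp : 0 < p := by exact_mod_cast (zero_lt_one.trans_le (Fact.out : 1 ≤ (p : ℝ≥0∞)))
  have hsum : 0 ≤ ∑ i, dist (x i) (y i) ^ p := by positivity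
  rw [dist_eq_sum (by simpa using hp), ENNReal.toReal_natCast]
  simp only [Real.rpow_natCast]
  rw [← Real.rpow_natCast, ← Real.rpow_mul hsum, one_div_mul_cancel (by positivity),
    Real.rpow_one]

/-- A nearest point of the box is assembled from nearest points in the factors. -/
theorem infDist_setOf_forall_mem_pow {s : ∀ i, Set (β i)} (hne : ∀ i, (s i).Nonempty)
    (hs : ∀ i, IsCompact (s i)) (x : PiLp p β) :
    infDist x {y : PiLp p β | ∀ i, y i ∈ s i} ^ p = ∑ i, infDist (x i) (s i) ^ p := by
  choose y hys hy using fun i => (hs i).exists_infDist_eq_dist (hne i) (x i)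
  have hys' : WithLp.toLp p y ∈ {y : PiLp p β | ∀ i, y i ∈ s i} := hys
  obtain ⟨z, hzs, hz⟩ := (isCompact_setOf_forall_mem hs).exists_infDist_eq_dist ⟨_, hys'⟩ x
  refine le_antisymm ?_ ?_
  · calc infDist x {y : PiLp p β | ∀ i, y i ∈ s i} ^ p
        ≤ dist x (WithLp.toLp p y) ^ p :=
          pow_le_pow_left₀ infDist_nonneg (infDist_le_dist_of_mem hys') p
      _ = ∑ i, infDist (x i) (s i) ^ p := by simp [dist_pow_eq_sum, hy]
  · calc ∑ i, infDist (x i) (s i) ^ p ≤ ∑ i, dist (x i) (z i) ^ p :=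
          Finset.sum_le_sum fun i _ =>
            pow_le_pow_left₀ infDist_nonneg (infDist_le_dist_of_mem (hzs i)) p
      _ = _ := by rw [← dist_pow_eq_sum, hz]

theorem hausdorffDist_setOf_forall_mem_pow {s t : ∀ i, Set (β i)} (hs : ∀ i, IsCompact (s i))
    (ht : ∀ i, IsCompact (t i)) (htne : ∀ i, (t i).Nonempty) (hts : ∀ i, t i ⊆ s i) :
    hausdorffDist {x : PiLp p β | ∀ i, x i ∈ s i} {x : PiLp p β | ∀ i, x i ∈ t i} ^ p =
      ∑ i, hausdorffDist (s i) (t i) ^ p := by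
  set S := {x : PiLp p β | ∀ i, x i ∈ s i}
  set T := {x : PiLp p β | ∀ i, x i ∈ t i}
  have hTS : T ⊆ S := fun x hx i => hts i (hx i)
  have hT : T.Nonempty := ⟨WithLp.toLp p fun i => (htne i).some, fun i => (htne i).some_mem⟩
  have hS := isCompact_setOf_forall_mem (p := p) hs
  obtain ⟨x, hxS, hx⟩ := hS.exists_infDist_eq_hausdorffDist_of_subset hT hTS
  choose y hys hy using fun i => (hs i).exists_infDist_eq_hausdorffDist_of_subset (htne i) (hts i)
  have hyS : WithLp.toLp p y ∈ S := hys
  refine le_antisymm ?_ ?_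
  · calc hausdorffDist S T ^ p = ∑ i, infDist (x i) (t i) ^ p := by
          rw [← hx, infDist_setOf_forall_mem_pow htne ht]
      _ ≤ ∑ i, hausdorffDist (s i) (t i) ^ p :=
          Finset.sum_le_sum fun i _ => pow_le_pow_left₀ infDist_nonneg
            (infDist_le_hausdorffDist_of_mem (hxS i)
              ((hs i).hausdorffEDist_ne_top_of_subset (htne i) (hts i))) p
  · calc ∑ i, hausdorffDist (s i) (t i) ^ p = infDist (WithLp.toLp p y) T ^ p := by
          simp only [infDist_setOf_forall_mem_pow htne ht, T, hy]
      _ ≤ hausdorffDist S T ^ p := pow_le_pow_left₀ infDist_nonneg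
          (infDist_le_hausdorffDist_of_mem hyS (hS.hausdorffEDist_ne_top_of_subset hT hTS)) p

end PiLp

theorem hausdorffDist_pow_prod_of_subsets_general
    (p : ℕ) [Fact (1 ≤ (p : ℝ≥0∞))] (k : ℕ)
    (Ps Qs : Fin k → Set (PiLp (p : ℝ≥0∞) (fun _ : Fin 2 => ℝ)))
    (hQne : ∀ i, (Qs i).Nonempty)
    (hPc : ∀ i, IsCompact (Ps i)) (hQc : ∀ i, IsCompact (Qs i))
    (hsub : ∀ i, Qs i ⊆ Ps i)
    (P Q : Set (PiLp (p : ℝ≥0∞) (fun _ : Fin k => PiLp (p : ℝ≥0∞) (fun _ : Fin 2 => ℝ))))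
    (hP : P = {x | ∀ i, x i ∈ Ps i}) (hQ : Q = {x | ∀ i, x i ∈ Qs i}) :
    Metric.hausdorffDist P Q ^ p = ∑ i, Metric.hausdorffDist (Ps i) (Qs i) ^ p := by
  subst hP hQ
  exact PiLp.hausdorffDist_setOf_forall_mem_pow hPc hQc hQne hsub

/-- **Hausdorff distance of certain direct products.**
For `p ≥ 1` and nonempty compact convex sets `Qᵢ ⊆ Pᵢ ⊆ ℝ²` (with the `ℓ_p`-norm on `ℝ²`),
the Hausdorff distance (w.r.t. the `ℓ_p`-norm on `ℝ^{2k} = ℝ² × ⋯ × ℝ²`) of the products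
`P = P₁ × ⋯ × P_k` and `Q = Q₁ × ⋯ × Q_k` satisfies
`δ_p(P,Q)^p = ∑ i, δ_p(Pᵢ,Qᵢ)^p`. -/
theorem hausdorffDist_pow_prod_of_subsets
    (p : ℕ) (hp : 1 ≤ p) [Fact (1 ≤ (p : ℝ≥0∞))] (k : ℕ)
    (Ps Qs : Fin k → Set (PiLp (p : ℝ≥0∞) (fun _ : Fin 2 => ℝ)))
    (hPne : ∀ i, (Ps i).Nonempty) (hQne : ∀ i, (Qs i).Nonempty)
    (hPc : ∀ i, IsCompact (Ps i)) (hQc : ∀ i, IsCompact (Qs i))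
    (hPconv : ∀ i, Convex ℝ (Ps i)) (hQconv : ∀ i, Convex ℝ (Qs i))
    (hsub : ∀ i, Qs i ⊆ Ps i)
    (P Q : Set (PiLp (p : ℝ≥0∞) (fun _ : Fin k => PiLp (p : ℝ≥0∞) (fun _ : Fin 2 => ℝ))))
    (hP : P = {x | ∀ i, x i ∈ Ps i}) (hQ : Q = {x | ∀ i, x i ∈ Qs i}) :
    Metric.hausdorffDist P Q ^ p = ∑ i, Metric.hausdorffDist (Ps i) (Qs i) ^ p :=
  hausdorffDist_pow_prod_of_subsets_general p k Ps Qs hQne hPc hQc hsub P Q hP hQ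
end

section
/- Let P ⊆ ℝ^d (Euclidean) be a nonempty compact convex set and ρ, ρ' > 0. Then P + ρ'B₂ = ⋂_{x ∈ bd(P+ρB₂)} { z ∈ ℝ^d : (x − Π_P(x))ᵀ z ≤ (x − Π_P(x))ᵀ Π_P(x) + ρρ' }, where the intersection runs over all boundary points x of P + ρB₂ and B₂ is the closed Euclidean unit ball. -/
open scoped RealInnerProductSpace Pointwise

open Metric Set Filter Topology

/-!
Since every point has a nearest point in `P`, the body `P + rB₂` is the closed `r`-thickening
of `P`. For a unit outer normal `v` of `P` at `q`, the point `q` stays nearest along the ray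
`q + t • v`, so `q + ρ • v` lies on the boundary of the `ρ`-thickening. The halfspace at a boundary point `x` contains `P + ρ'B₂` by the
variational inequality for `Π_P(x)` and Cauchy–Schwarz. Conversely, a point `z` at distance
`r > ρ'` from `P`, with nearest point `q`, violates the halfspace at `x = q + (ρ / r) • (z - q)`,
where `⟪x - q, z - q⟫ = ρ r`.
-/

section PseudoMetric

variable {α : Type*} [PseudoMetricSpace α] {s : Set α} {x : α} {δ : ℝ}

theorem mem_cthickening_iff_infDist_le (hs : s.Nonempty) (hδ : 0 ≤ δ) :
    x ∈ cthickening δ s ↔ infDist x s ≤ δ := by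
  rw [mem_cthickening_iff, infDist]
  exact ENNReal.le_ofReal_iff_toReal_le (infEDist_ne_top hs) hδ

theorem infDist_eq_of_mem_frontier_cthickening (hδ : 0 ≤ δ)
    (hx : x ∈ frontier (cthickening δ s)) : infDist x s = δ := by
  rw [infDist, frontier_cthickening_subset s hx, ENNReal.toReal_ofReal hδ]

end PseudoMetric

theorem add_closedBall_zero_eq_cthickening {E : Type*} [SeminormedAddCommGroup E] {P : Set E}
    (hP : ∀ x, ∃ q ∈ P, ‖x - q‖ = infDist x P) {r : ℝ} (hr : 0 ≤ r) :
    P + closedBall (0 : E) r = cthickening r P := by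
  ext z
  constructor
  · rintro ⟨p, hp, b, hb, rfl⟩
    refine mem_cthickening_of_dist_le _ p r P hp ?_
    simpa [dist_eq_norm] using hb
  · intro hz
    obtain ⟨q, hq, hzq⟩ := hP z
    rw [mem_cthickening_iff_infDist_le ⟨q, hq⟩ hr, ← hzq] at hz
    exact ⟨q, hq, z - q, by simpa using hz, add_sub_cancel q z⟩

section InnerProduct

variable {E : Type*} [NormedAddCommGroup E] [InnerProductSpace ℝ E] {P : Set E}
  {p q q' v x z : E} {ρ t : ℝ}

theorem norm_sub_eq_infDist_iff_inner_sub_nonpos (hP : Convex ℝ P) (hq : q ∈ P) :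
    ‖x - q‖ = infDist x P ↔ ∀ p ∈ P, ⟪x - q, p - q⟫ ≤ 0 := by
  rw [infDist_eq_iInf]
  simp_rw [dist_eq_norm]
  exact norm_eq_iInf_iff_real_inner_le_zero hP hq

theorem eq_of_norm_sub_eq_infDist (hP : Convex ℝ P) (hq : q ∈ P) (hq' : q' ∈ P)
    (h : ‖x - q‖ = infDist x P) (h' : ‖x - q'‖ = infDist x P) : q = q' := by
  have hle := (norm_sub_eq_infDist_iff_inner_sub_nonpos hP hq).1 h q' hq'
  have hle' := (norm_sub_eq_infDist_iff_inner_sub_nonpos hP hq').1 h' q hq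
  have hsq : ⟪q - q', q - q'⟫ = ⟪x - q', q - q'⟫ + ⟪x - q, q' - q⟫ := by
    simp only [inner_sub_left, inner_sub_right, real_inner_comm q q']
    ring
  exact sub_eq_zero.1 (real_inner_self_nonpos.1 (by linarith))

theorem inner_sub_le_mul_norm_sub (hP : Convex ℝ P) (hq : q ∈ P)
    (hx : ‖x - q‖ = infDist x P) (hp : p ∈ P) : ⟪x - q, z - q⟫ ≤ ‖x - q‖ * ‖z - p‖ := by
  have hpq := (norm_sub_eq_infDist_iff_inner_sub_nonpos hP hq).1 hx p hp
  calc ⟪x - q, z - q⟫ = ⟪x - q, p - q⟫ + ⟪x - q, z - p⟫ := by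
        rw [← inner_add_right, sub_add_sub_comm, add_comm p, add_sub_add_right_eq_sub]
    _ ≤ ‖x - q‖ * ‖z - p‖ := by linarith [real_inner_le_norm (x - q) (z - p)]

theorem infDist_add_smul_eq (hP : Convex ℝ P) (hq : q ∈ P)
    (hv : ∀ p ∈ P, ⟪v, p - q⟫ ≤ 0) (ht : 0 ≤ t) : infDist (q + t • v) P = t * ‖v‖ := by
  have h : ‖q + t • v - q‖ = infDist (q + t • v) P := by
    refine (norm_sub_eq_infDist_iff_inner_sub_nonpos hP hq).2 fun p hp => ?_
    rw [add_sub_cancel_left, real_inner_smul_left]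
    exact mul_nonpos_of_nonneg_of_nonpos ht (hv p hp)
  rw [← h, add_sub_cancel_left, norm_smul, Real.norm_of_nonneg ht]

theorem add_smul_mem_frontier_cthickening (hP : Convex ℝ P) (hq : q ∈ P)
    (hv : ∀ p ∈ P, ⟪v, p - q⟫ ≤ 0) (hv₁ : ‖v‖ = 1) (hρ : 0 ≤ ρ) :
    q + ρ • v ∈ frontier (cthickening ρ P) := by
  have hdist : ∀ t, 0 ≤ t → (q + t • v ∈ cthickening ρ P ↔ t ≤ ρ) := fun t ht => by
    rw [mem_cthickening_iff_infDist_le ⟨q, hq⟩ hρ, infDist_add_smul_eq hP hq hv ht, hv₁,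
      mul_one]
  rw [frontier_eq_closure_inter_closure, isClosed_cthickening.closure_eq]
  have hpath : Tendsto (fun t : ℝ => q + t • v) (𝓝[>] ρ) (𝓝 (q + ρ • v)) :=
    ((continuous_const.add (continuous_id.smul continuous_const)).tendsto' ρ _ rfl).mono_left
      nhdsWithin_le_nhds
  refine ⟨(hdist ρ hρ).2 le_rfl, mem_closure_of_tendsto hpath ?_⟩
  · filter_upwards [self_mem_nhdsWithin] with t (ht : ρ < t)
    rw [mem_compl_iff, hdist t (hρ.trans ht.le)]
    exact ht.not_ge

theorem exists_mem_frontier_cthickening_inner_sub_eq (hP : Convex ℝ P) (hq : q ∈ P)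
    (hz : ‖z - q‖ = infDist z P) (hzq : z ≠ q) (hρ : 0 ≤ ρ) :
    ∃ x ∈ frontier (cthickening ρ P),
      ‖x - q‖ = infDist x P ∧ ⟪x - q, z - q⟫ = ρ * ‖z - q‖ := by
  have hr : 0 < ‖z - q‖ := norm_pos_iff.2 (sub_ne_zero.2 hzq)
  set v := ‖z - q‖⁻¹ • (z - q)
  have hv₁ : ‖v‖ = 1 := by
    rw [norm_smul, norm_inv, norm_norm, inv_mul_cancel₀ hr.ne']
  have hv : ∀ p ∈ P, ⟪v, p - q⟫ ≤ 0 := fun p hp => by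
    rw [real_inner_smul_left]
    exact mul_nonpos_of_nonneg_of_nonpos (inv_nonneg.2 hr.le)
      ((norm_sub_eq_infDist_iff_inner_sub_nonpos hP hq).1 hz p hp)
  refine ⟨q + ρ • v, add_smul_mem_frontier_cthickening hP hq hv hv₁ hρ, ?_, ?_⟩
  · rw [infDist_add_smul_eq hP hq hv hρ, hv₁, mul_one, add_sub_cancel_left, norm_smul, hv₁,
      mul_one, Real.norm_of_nonneg hρ]
  · rw [add_sub_cancel_left, real_inner_smul_left, real_inner_smul_left,
      real_inner_self_eq_norm_sq]
    field_simp

end InnerProduct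

theorem outer_parallel_body_eq_iInter_halfspaces_general
    (d : ℕ) (P : Set (EuclideanSpace ℝ (Fin d)))
    (hPconv : Convex ℝ P)
    (proj : EuclideanSpace ℝ (Fin d) → EuclideanSpace ℝ (Fin d))
    (hproj : ∀ x, proj x ∈ P ∧ ‖x - proj x‖ = Metric.infDist x P)
    (ρ ρ' : ℝ) (hρ : 0 < ρ) (hρ' : 0 < ρ') :
    P + ρ' • Metric.closedBall (0 : EuclideanSpace ℝ (Fin d)) 1
      = ⋂ x ∈ frontier (P + ρ • Metric.closedBall (0 : EuclideanSpace ℝ (Fin d)) 1),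
          {z : EuclideanSpace ℝ (Fin d) |
            ⟪x - proj x, z⟫ ≤ ⟪x - proj x, proj x⟫ + ρ * ρ'} := by
  have hnear : ∀ x, ∃ q ∈ P, ‖x - q‖ = infDist x P := fun x => ⟨proj x, hproj x⟩
  simp only [smul_unitClosedBall_of_nonneg, hρ.le, hρ'.le,
    add_closedBall_zero_eq_cthickening hnear]
  ext z
  simp only [mem_iInter, mem_ofPred_eq]
  rw [mem_cthickening_iff_infDist_le ⟨_, (hproj z).1⟩ hρ'.le]
  constructor
  · intro hz x hx
    have hxρ : ‖x - proj x‖ = ρ :=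
      (hproj x).2.trans (infDist_eq_of_mem_frontier_cthickening hρ.le hx)
    have := inner_sub_le_mul_norm_sub hPconv (hproj x).1 (hproj x).2 (z := z) (hproj z).1
    rw [inner_sub_right, hxρ, (hproj z).2] at this
    linarith [mul_le_mul_of_nonneg_left hz hρ.le]
  · intro hz
    by_contra! hfar
    obtain ⟨hq, hzq⟩ := hproj z
    have hne : z ≠ proj z := fun h => by
      rw [← hzq, ← h, sub_self, norm_zero] at hfar
      linarith
    obtain ⟨x, hx, hxq, hinner⟩ :=
      exists_mem_frontier_cthickening_inner_sub_eq hPconv hq hzq hne hρ.le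
    have hproj_x : proj x = proj z :=
      eq_of_norm_sub_eq_infDist hPconv (hproj x).1 hq (hproj x).2 hxq
    have := hz x hx
    rw [hproj_x, ← sub_le_iff_le_add', ← inner_sub_right, hinner, hzq] at this
    linarith [mul_lt_mul_of_pos_left hfar hρ]

/-- **Outer parallel bodies as intersections of halfspaces.**
Let `P ⊆ ℝ^d` be a nonempty compact convex set and `ρ, ρ' > 0`. Then
`P + ρ'B₂ = ⋂_{x ∈ bd(P+ρB₂)} { z : ⟪x − Π_P(x), z⟫ ≤ ⟪x − Π_P(x), Π_P(x)⟫ + ρρ' }`,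
where `Π_P` is the (unique) nearest-point map of `P`. -/
theorem outer_parallel_body_eq_iInter_halfspaces
    (d : ℕ) (P : Set (EuclideanSpace ℝ (Fin d)))
    (hPne : P.Nonempty) (hPc : IsCompact P) (hPconv : Convex ℝ P)
    (proj : EuclideanSpace ℝ (Fin d) → EuclideanSpace ℝ (Fin d))
    (hproj : ∀ x, proj x ∈ P ∧ ‖x - proj x‖ = Metric.infDist x P)
    (ρ ρ' : ℝ) (hρ : 0 < ρ) (hρ' : 0 < ρ') :
    P + ρ' • Metric.closedBall (0 : EuclideanSpace ℝ (Fin d)) 1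
      = ⋂ x ∈ frontier (P + ρ • Metric.closedBall (0 : EuclideanSpace ℝ (Fin d)) 1),
          {z : EuclideanSpace ℝ (Fin d) |
            ⟪x - proj x, z⟫ ≤ ⟪x - proj x, proj x⟫ + ρ * ρ'} :=
  outer_parallel_body_eq_iInter_halfspaces_general d P hPconv proj hproj ρ ρ' hρ hρ'
end

section
/- Let P ⊆ ℝ^d (Euclidean) be a nonempty compact convex set and let q ∈ ℝ^d with q ∉ P. Then the function f_q(α,c) := d₂(q, αP + c) on (0,∞) × ℝ^d ⊆ ℝ^{d+1} is differentiable at (1,0) with gradient ∇f_q(1,0) = −(1/‖q − Π_P(q)‖₂) · ( (q − Π_P(q))ᵀΠ_P(q) , q − Π_P(q) ) ∈ ℝ × ℝ^d. -/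
open scoped RealInnerProductSpace

/-! The map `(α, c) ↦ d(q, αP + c)` is squeezed between two functions that agree at `(1, 0)`
and share the same derivative there. Writing `p = Π_P(q)` and `u = (q - p) / ‖q - p‖`, the point
`αp + c` lies in `αP + c`, so `f_q(α, c) ≤ ‖q - αp - c‖`; and since `u` is an outer normal of `P`
at `p`, for `α ≥ 0` every point of `αP + c` lies in the half-space `⟪u, ·⟫ ≤ ⟪u, αp + c⟫`, so
`f_q(α, c) ≥ ⟪u, q - αp - c⟫`. The lower bound is the linearisation of the upper one at `(1, 0)`.
-/

open Metric Asymptotics InnerProductSpace Filter Topology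

theorem hasFDerivAt_of_le_of_le {E : Type*} [NormedAddCommGroup E] [NormedSpace ℝ E]
    {f g h : E → ℝ} {L : E →L[ℝ] ℝ} {x : E}
    (hh : HasFDerivAt h L x) (hg : HasFDerivAt g L x)
    (hhf : ∀ᶠ y in 𝓝 x, h y ≤ f y) (hfg : ∀ᶠ y in 𝓝 x, f y ≤ g y)
    (hhx : h x = f x) (hgx : g x = f x) :
    HasFDerivAt f L x := by
  rw [hasFDerivAt_iff_isLittleO] at hh hg ⊢
  have hgap : (fun y => g y - h y) =o[𝓝 x] fun y => y - x :=
    (hg.sub hh).congr_left fun y => by rw [hgx, hhx]; ring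
  have hfh : (fun y => f y - h y) =o[𝓝 x] fun y => y - x := by
    refine IsBigO.trans_isLittleO (IsBigO.of_bound 1 ?_) hgap
    filter_upwards [hhf, hfg] with y hy₁ hy₂
    rw [Real.norm_of_nonneg (by linarith), Real.norm_of_nonneg (by linarith)]
    linarith
  exact (hh.add hfh).congr_left fun y => by rw [hhx]; ring

section

variable {E : Type*} [NormedAddCommGroup E] [InnerProductSpace ℝ E]

theorem hasFDerivAt_norm_of_ne_zero {x : E} (hx : x ≠ 0) :
    HasFDerivAt (‖·‖) (innerSL ℝ (‖x‖⁻¹ • x)) x := by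
  have hnx : ‖x‖ ≠ 0 := norm_ne_zero_iff.mpr hx
  have hsqrt := (hasStrictFDerivAt_norm_sq x).hasFDerivAt.sqrt (pow_ne_zero 2 hnx)
  simp only [Real.sqrt_sq (norm_nonneg _)] at hsqrt
  refine hsqrt.congr_fderiv ?_
  ext y
  simp only [smul_apply, innerSL_apply_apply, real_inner_smul_left, two_smul, add_apply,
    smul_eq_mul]
  field_simp
  ring

theorem Convex.inner_le_of_norm_sub_eq_infDist {P : Set E} (hP : Convex ℝ P) {p q w : E}
    (hp : p ∈ P) (hpq : ‖q - p‖ = infDist q P) (hw : w ∈ P) :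
    ⟪q - p, w⟫ ≤ ⟪q - p, p⟫ := by
  have hiInf : ‖q - p‖ = ⨅ w : P, ‖q - w‖ := by
    rw [hpq, infDist_eq_iInf]
    exact iInf_congr fun w => dist_eq_norm q w
  have := (norm_eq_iInf_iff_real_inner_le_zero hP hp).mp hiInf w hw
  rw [inner_sub_right] at this
  linarith

theorem inner_sub_le_infDist_smul_add_image {P : Set E} (hP : P.Nonempty) {u p q c : E} {α : ℝ}
    (hu : ‖u‖ ≤ 1) (hα : 0 ≤ α) (hsupp : ∀ w ∈ P, ⟪u, w⟫ ≤ ⟪u, p⟫) :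
    ⟪u, q - (α • p + c)⟫ ≤ infDist q ((fun x => α • x + c) '' P) := by
  rw [le_infDist (hP.image _)]
  rintro _ ⟨w, hw, rfl⟩
  calc ⟪u, q - (α • p + c)⟫ ≤ ⟪u, q - (α • w + c)⟫ := by
        simp only [inner_sub_right, inner_add_right, real_inner_smul_right]
        nlinarith [hsupp w hw]
    _ ≤ ‖u‖ * ‖q - (α • w + c)‖ := real_inner_le_norm _ _
    _ ≤ dist q (α • w + c) := by
        rw [dist_eq_norm]
        exact mul_le_of_le_one_left (norm_nonneg _) hu

theorem hasFDerivAt_infDist_smul_add_image {P : Set E} (hP : Convex ℝ P) {p q : E}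
    (hp : p ∈ P) (hpq : ‖q - p‖ = infDist q P) (hqp : q ≠ p) :
    HasFDerivAt (fun v : ℝ × E => infDist q ((fun x => v.1 • x + v.2) '' P))
      (-(innerSL ℝ (‖q - p‖⁻¹ • (q - p))).comp
        ((ContinuousLinearMap.fst ℝ ℝ E).smulRight p + ContinuousLinearMap.snd ℝ ℝ E))
      (1, 0) := by
  set u := ‖q - p‖⁻¹ • (q - p)
  set A := (ContinuousLinearMap.fst ℝ ℝ E).smulRight p + ContinuousLinearMap.snd ℝ ℝ E
  have hA : ∀ v : ℝ × E, A v = v.1 • p + v.2 := fun v => rfl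
  have hd : ‖q - p‖ ≠ 0 := norm_ne_zero_iff.mpr (sub_ne_zero.mpr hqp)
  have hu : ‖u‖ = 1 := by rw [norm_smul, norm_inv, norm_norm, inv_mul_cancel₀ hd]
  have huqp : ⟪u, q - p⟫ = ‖q - p‖ := by
    rw [real_inner_smul_left, real_inner_self_eq_norm_sq, sq, inv_mul_cancel_left₀ hd]
  have hsupp : ∀ w ∈ P, ⟪u, w⟫ ≤ ⟪u, p⟫ := fun w hw => by
    simp only [u, real_inner_smul_left]
    exact mul_le_mul_of_nonneg_left (hP.inner_le_of_norm_sub_eq_infDist hp hpq hw) (by positivity)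
  have hφ : HasFDerivAt (fun v => q - A v) (-A) ((1, 0) : ℝ × E) :=
    A.hasFDerivAt.const_sub q
  have hφ₀ : q - A (1, 0) = q - p := by rw [hA, one_smul, add_zero]
  have hnorm : HasFDerivAt (‖·‖) (innerSL ℝ u) (q - A (1, 0)) := by
    rw [hφ₀]
    exact hasFDerivAt_norm_of_ne_zero (sub_ne_zero.mpr hqp)
  have hupper : HasFDerivAt (fun v => ‖q - A v‖) ((innerSL ℝ u).comp (-A)) (1, 0) :=
    HasFDerivAt.comp (f := fun v => q - A v) _ hnorm hφ
  have hlower : HasFDerivAt (fun v => ⟪u, q - A v⟫) ((innerSL ℝ u).comp (-A)) (1, 0) :=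
    (innerSL ℝ u).hasFDerivAt.comp _ hφ
  have hval : infDist q ((fun x => (1 : ℝ) • x + 0) '' P) = ‖q - p‖ := by
    simp only [one_smul, add_zero, Set.image_id', hpq]
  rw [← ContinuousLinearMap.comp_neg]
  refine hasFDerivAt_of_le_of_le hlower hupper ?_ ?_ ?_ ?_
  · have hα : ∀ᶠ v : ℝ × E in 𝓝 (1, 0), 0 ≤ v.1 :=
      continuous_fst.continuousAt.eventually (eventually_ge_nhds zero_lt_one)
    filter_upwards [hα] with v hv
    exact inner_sub_le_infDist_smul_add_image ⟨p, hp⟩ hu.le hv hsupp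
  · exact Eventually.of_forall fun v => dist_eq_norm q (A v) ▸
      infDist_le_dist_of_mem (Set.mem_image_of_mem _ hp)
  · rw [hφ₀, huqp, hval]
  · rw [hφ₀, hval]

end

theorem hasGradientAt_fq_general
    (d : ℕ) (P : Set (EuclideanSpace ℝ (Fin d)))
    (hPconv : Convex ℝ P)
    (proj : EuclideanSpace ℝ (Fin d) → EuclideanSpace ℝ (Fin d))
    (hproj : ∀ x, proj x ∈ P ∧ ‖x - proj x‖ = Metric.infDist x P)
    (q : EuclideanSpace ℝ (Fin d)) (hq : q ∉ P) :
    HasGradientAt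
      (fun v : WithLp 2 (ℝ × EuclideanSpace ℝ (Fin d)) =>
        Metric.infDist q
          ((fun x => ((WithLp.equiv 2 _) v).1 • x + ((WithLp.equiv 2 _) v).2) '' P))
      (-((WithLp.equiv 2 (ℝ × EuclideanSpace ℝ (Fin d))).symm
        (‖q - proj q‖⁻¹ * ⟪q - proj q, proj q⟫, ‖q - proj q‖⁻¹ • (q - proj q))))
      ((WithLp.equiv 2 (ℝ × EuclideanSpace ℝ (Fin d))).symm (1, 0)) := by
  obtain ⟨hp, hpq⟩ := hproj q
  have hqp : q ≠ proj q := fun h => hq (h ▸ hp)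
  have hF := (hasFDerivAt_infDist_smul_add_image hPconv hp hpq hqp).comp
    ((WithLp.equiv 2 (ℝ × EuclideanSpace ℝ (Fin d))).symm (1, 0))
    (WithLp.prodContinuousLinearEquiv 2 ℝ ℝ (EuclideanSpace ℝ (Fin d))).hasFDerivAt
  rw [hasGradientAt_iff_hasFDerivAt]
  refine hF.congr_fderiv ?_
  ext w
  simp only [toDual_apply_apply, inner_neg_left, WithLp.prod_inner_apply, WithLp.equiv_symm_apply,
    WithLp.ofLp_fst, WithLp.ofLp_snd, ContinuousLinearMap.comp_apply, neg_apply, add_apply,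
    ContinuousLinearEquiv.coe_coe, WithLp.prodContinuousLinearEquiv_apply,
    ContinuousLinearMap.smulRight_apply, ContinuousLinearMap.coe_fst', ContinuousLinearMap.coe_snd',
    coe_innerSL_apply, inner_add_right, real_inner_smul_left, real_inner_smul_right,
    RCLike.inner_apply, conj_trivial]

/-- **Differentiating `f_q`.**
Let `P ⊆ ℝ^d` be a nonempty compact convex set and `q ∉ P`. Then the function
`f_q(α,c) := d₂(q, αP + c)` on `ℝ × ℝ^d ≅ ℝ^{d+1}` (with the ℓ₂ inner product) is
differentiable at `(1,0)` with gradient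
`−(1/‖q − Π_P(q)‖) ⬝ (⟪q − Π_P(q), Π_P(q)⟫, q − Π_P(q))`,
where `Π_P` is the (unique) nearest-point map of `P`. -/
theorem hasGradientAt_fq
    (d : ℕ) (P : Set (EuclideanSpace ℝ (Fin d)))
    (hPne : P.Nonempty) (hPc : IsCompact P) (hPconv : Convex ℝ P)
    (proj : EuclideanSpace ℝ (Fin d) → EuclideanSpace ℝ (Fin d))
    (hproj : ∀ x, proj x ∈ P ∧ ‖x - proj x‖ = Metric.infDist x P)
    (q : EuclideanSpace ℝ (Fin d)) (hq : q ∉ P) :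
    HasGradientAt
      (fun v : WithLp 2 (ℝ × EuclideanSpace ℝ (Fin d)) =>
        Metric.infDist q
          ((fun x => ((WithLp.equiv 2 _) v).1 • x + ((WithLp.equiv 2 _) v).2) '' P))
      (-((WithLp.equiv 2 (ℝ × EuclideanSpace ℝ (Fin d))).symm
        (‖q - proj q‖⁻¹ * ⟪q - proj q, proj q⟫, ‖q - proj q‖⁻¹ • (q - proj q))))
      ((WithLp.equiv 2 (ℝ × EuclideanSpace ℝ (Fin d))).symm (1, 0)) :=
  hasGradientAt_fq_general d P hPconv proj hproj q hq
end

section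
/- Let P, Q ⊆ ℝ^d (Euclidean) be convex bodies containing the origin in their interiors. Then P is in optimal homothetic position with respect to Q (i.e., δ₂(P,Q) = δ_H(P,Q)) if and only if there exist ρ ≥ 0 and finite sets R ⊆ P, S ⊆ Q with |R| + |S| ≤ d + 2 such that: (1) P ⊆ Q + ρB₂ and Q ⊆ P + ρB₂; (2) d₂(p,Q) = ρ for all p ∈ R and d₂(q,P) = ρ for all q ∈ S; (3) the origin of ℝ^{d+1} lies in the convex hull of the set { ( (p − Π_Q(p))ᵀp , p − Π_Q(p) ) : p ∈ R } ∪ { ( (Π_P(q) − q)ᵀΠ_P(q) , Π_P(q) − q ) : q ∈ S }. -/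
/-!
If `p ∈ P` realises `ρ = δ₂(P, Q)` with outer normal `u = p - Π_Q p`, the variational
inequality for `Π_Q` gives, for every homothety `x ↦ α x + c`,
`ρ · d₂(α p + c, Q) ≥ ⟪u, α p + c - Π_Q (α p + c)⟫ ≥ ρ² + (α - 1) ⟪u, p⟫ + ⟪u, c⟫`,
and symmetrically for the contact points of `Q`. The right-hand side is affine in the contact
vector `(⟪u, p⟫, u)`, so if `0` is a convex combination of contact vectors then
`ρ² ≤ ρ · δ₂(α P + c, Q)`.

Conversely, if `0` is not in the (compact) convex hull of all contact vectors, a separating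
functional `(z₁, z₂) ↦ t z₁ + ⟪w, z₂⟫` is negative on them. Moving by `α = 1 + s t`, `c = s w`
then shortens every normal of length close to `ρ` to first order in `s`, while the short ones
stay short, so `δ₂` decreases for small `s > 0`. Carathéodory's theorem in `ℝ × ℝ^d` finally
selects at most `d + 2` contact vectors.
-/

open scoped RealInnerProductSpace Pointwise
open Metric Set Filter Topology

theorem exists_dist_le_hausdorffDist {X : Type*} [PseudoMetricSpace X] {A B : Set X}
    (hA : Bornology.IsBounded A) (hBc : IsCompact B) (hB : B.Nonempty) {a : X} (ha : a ∈ A) :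
    ∃ b ∈ B, dist a b ≤ hausdorffDist A B := by
  obtain ⟨b, hb, hab⟩ := hBc.exists_infDist_eq_dist hB a
  exact ⟨b, hb, hab ▸ infDist_le_hausdorffDist_of_mem ha
    (hausdorffEDist_ne_top_of_nonempty_of_bounded ⟨a, ha⟩ hB hA hBc.isBounded)⟩

theorem IsCompact.exists_forall_le_sub_or_le_neg {X : Type*} [TopologicalSpace X] {K : Set X}
    (hK : IsCompact K) {d ψ : X → ℝ} (hd : ContinuousOn d K) (hψ : ContinuousOn ψ K) {ρ : ℝ}
    (hdρ : ∀ x ∈ K, d x ≤ ρ) (hψneg : ∀ x ∈ K, d x = ρ → ψ x < 0) :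
    ∃ δ > 0, ∀ x ∈ K, d x ≤ ρ - δ ∨ ψ x ≤ -δ := by
  have hneg : ∀ x ∈ K, min (d x - ρ) (ψ x) < 0 := fun x hx =>
    min_lt_iff.2 <| ((hdρ x hx).lt_or_eq).imp sub_neg.2 (hψneg x hx)
  rcases K.eq_empty_or_nonempty with rfl | hK₀
  · exact ⟨1, one_pos, by simp⟩
  obtain ⟨x₀, hx₀, hmax⟩ := hK.exists_isMaxOn hK₀ (f := fun x => min (d x - ρ) (ψ x))
    (ContinuousOn.inf (hd.sub continuousOn_const) hψ)
  refine ⟨-min (d x₀ - ρ) (ψ x₀), neg_pos.2 (hneg x₀ hx₀), fun x hx => ?_⟩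
  have hx' : min (d x - ρ) (ψ x) ≤ min (d x₀ - ρ) (ψ x₀) := hmax hx
  exact (min_le_iff.1 hx').imp (fun h => by linarith) fun h => by linarith

theorem Finset.exists_card_add_card_le_of_subset_image_union {α β : Type*} [Nonempty α]
    {g h : α → β} {A B : Set α} {t : Finset β} (ht : ↑t ⊆ g '' A ∪ h '' B) :
    ∃ R S : Finset α, ↑R ⊆ A ∧ ↑S ⊆ B ∧ R.card + S.card ≤ t.card ∧
      ↑t ⊆ g '' ↑R ∪ h '' ↑S := by
  classical
  set t₁ := t.filter (· ∈ g '' A)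
  have ht₂ : ∀ z ∈ t \ t₁, z ∈ h '' B := fun z hz => by
    simp only [t₁, Finset.mem_sdiff, Finset.mem_filter, not_and] at hz
    exact (ht hz.1).resolve_left (hz.2 hz.1)
  refine ⟨t₁.image (Function.invFunOn g A), (t \ t₁).image (Function.invFunOn h B), ?_, ?_, ?_, ?_⟩
  · simp only [Finset.coe_image, Set.image_subset_iff]
    exact fun z hz => Function.invFunOn_mem (Finset.mem_filter.1 hz).2
  · simp only [Finset.coe_image, Set.image_subset_iff]
    exact fun z hz => Function.invFunOn_mem (ht₂ z hz)
  · calc _ ≤ t₁.card + (t \ t₁).card := add_le_add Finset.card_image_le Finset.card_image_le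
      _ = t.card := by rw [add_comm, Finset.card_sdiff_add_card_eq_card (Finset.filter_subset _ _)]
  · intro z hz
    by_cases hzA : z ∈ g '' A
    · exact .inl ⟨_, Finset.mem_coe.2 (Finset.mem_image_of_mem _ (Finset.mem_filter.2 ⟨hz, hzA⟩)),
        Function.invFunOn_eq hzA⟩
    · have hz₂ : z ∈ t \ t₁ := Finset.mem_sdiff.2 ⟨hz, fun h => hzA (Finset.mem_filter.1 h).2⟩
      exact .inr ⟨_, Finset.mem_coe.2 (Finset.mem_image_of_mem _ hz₂),
        Function.invFunOn_eq (ht₂ z hz₂)⟩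

theorem exists_finset_card_le_finrank_mem_convexHull {V : Type*} [AddCommGroup V] [Module ℝ V]
    [FiniteDimensional ℝ V] {s : Set V} {x : V} (hx : x ∈ convexHull ℝ s) :
    ∃ t : Finset V, ↑t ⊆ s ∧ t.card ≤ Module.finrank ℝ V + 1 ∧ x ∈ convexHull ℝ ↑t := by
  rw [convexHull_eq_union] at hx
  simp only [mem_iUnion] at hx
  obtain ⟨t, hts, hai, hxt⟩ := hx
  have hcard := hai.card_le_finrank_succ.trans (Nat.succ_le_succ (Submodule.finrank_le _))
  exact ⟨t, hts, by simpa using hcard, hxt⟩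

section NormedSpace

variable {E : Type*} [NormedAddCommGroup E] [NormedSpace ℝ E]

theorem subset_add_smul_unitClosedBall_iff {A B : Set E} {ρ : ℝ} (hρ : 0 ≤ ρ) :
    A ⊆ B + ρ • closedBall (0 : E) 1 ↔ ∀ a ∈ A, ∃ b ∈ B, dist a b ≤ ρ := by
  simp only [smul_unitClosedBall, Real.norm_of_nonneg hρ, subset_def, Set.mem_add,
    mem_closedBall_zero_iff, dist_eq_norm]
  refine forall₂_congr fun a _ => ⟨?_, ?_⟩
  · rintro ⟨b, hb, y, hy, rfl⟩
    exact ⟨b, hb, by rwa [add_sub_cancel_left]⟩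
  · rintro ⟨b, hb, hab⟩
    exact ⟨b, hb, a - b, hab, add_sub_cancel _ _⟩

theorem hausdorffDist_eq_sInf_iff {P Q : Set E} :
    hausdorffDist P Q = sInf {ρ : ℝ | ∃ α : ℝ, 0 < α ∧ ∃ c : E,
        ρ = hausdorffDist ((fun p => α • p + c) '' P) Q}
      ↔ ∀ α : ℝ, 0 < α → ∀ c : E,
          hausdorffDist P Q ≤ hausdorffDist ((fun p => α • p + c) '' P) Q := by
  set T : Set ℝ := {ρ | ∃ α : ℝ, 0 < α ∧ ∃ c : E, ρ = hausdorffDist ((fun p => α • p + c) '' P) Q}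
  have hmem : hausdorffDist P Q ∈ T := ⟨1, one_pos, 0, by simp⟩
  constructor
  · intro h α hα c
    rw [h]
    exact csInf_le ⟨0, by rintro _ ⟨α, -, c, rfl⟩; exact hausdorffDist_nonneg⟩ ⟨α, hα, c, rfl⟩
  · intro h
    refine (IsLeast.csInf_eq ⟨hmem, ?_⟩).symm
    rintro _ ⟨α, hα, c, rfl⟩
    exact h α hα c

theorem Fintype.sum_extend_zero {ι κ M : Type*} [Fintype ι] [Fintype κ] [AddCommMonoid M]
    {e : ι → κ} (he : Function.Injective e) (f : ι → M) :
    ∑ k, Function.extend e f 0 k = ∑ i, f i :=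
  (Fintype.sum_of_injective e he f _
    (fun k hk => Function.extend_apply' f (0 : κ → M) k (by simpa using hk))
    fun i => (he.extend_apply _ _ _).symm).symm

theorem IsCompact.convexHull [FiniteDimensional ℝ E] {s : Set E} (hs : IsCompact s) :
    IsCompact (_root_.convexHull ℝ s) := by
  rcases s.eq_empty_or_nonempty with rfl | ⟨x₀, hx₀⟩
  · simp
  set n := Module.finrank ℝ E + 1
  -- Carathéodory: `n` points of `s` suffice for every convex combination
  suffices h : _root_.convexHull ℝ s =
      (fun wz : (Fin n → ℝ) × (Fin n → E) => ∑ i, wz.1 i • wz.2 i) ''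
        (stdSimplex ℝ (Fin n) ×ˢ univ.pi fun _ => s) by
    rw [h]
    exact ((isCompact_stdSimplex (𝕜 := ℝ) (ι := Fin n)).prod (isCompact_univ_pi fun _ => hs)).image
      (by fun_prop)
  refine Subset.antisymm (fun x hx => ?_) ?_
  · obtain ⟨ι, _, z, w, hzs, hz, hw0, hw1, rfl⟩ := eq_pos_convex_span_of_mem_convexHull hx
    obtain ⟨e⟩ : Nonempty (ι ↪ Fin n) := Function.Embedding.nonempty_of_card_le
      (by simpa using hz.card_le_finrank_succ.trans (Nat.succ_le_succ (Submodule.finrank_le _)))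
    set W := Function.extend e w 0
    set Z := Function.extend e z fun _ => x₀
    have hcases (i : Fin n) : (∃ j, W i = w j ∧ Z i = z j ∧
          Function.extend e (fun j => w j • z j) 0 i = w j • z j) ∨
        (W i = 0 ∧ Z i = x₀ ∧ Function.extend e (fun j => w j • z j) 0 i = 0) := by
      by_cases hi : ∃ j, e j = i
      · obtain ⟨j, rfl⟩ := hi
        exact .inl ⟨j, by simp only [W, Z, e.injective.extend_apply, and_self]⟩
      · exact .inr (by simp only [W, Z, Function.extend_apply' _ _ _ hi, Pi.zero_apply, and_self])
    refine ⟨(W, Z), ⟨⟨fun i => ?_, ?_⟩, fun i _ => ?_⟩, ?_⟩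
    · change 0 ≤ W i
      rcases hcases i with ⟨j, h, -⟩ | ⟨h, -⟩
      exacts [h ▸ (hw0 j).le, h.ge]
    · rw [Fintype.sum_extend_zero e.injective, hw1]
    · change Z i ∈ s
      rcases hcases i with ⟨j, -, h, -⟩ | ⟨-, h, -⟩
      exacts [h ▸ hzs (mem_range_self j), h ▸ hx₀]
    · rw [← Fintype.sum_extend_zero e.injective]
      refine Fintype.sum_congr _ _ fun i => ?_
      change W i • Z i = _
      rcases hcases i with ⟨j, h₁, h₂, h₃⟩ | ⟨h₁, -, h₃⟩ <;> rw [h₁, h₃]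
      · rw [h₂]
      · rw [zero_smul]
  · rintro _ ⟨⟨w, z⟩, ⟨⟨hw0, hw1⟩, hz⟩, rfl⟩
    exact (convex_convexHull ℝ s).sum_mem (fun i _ => hw0 i) hw1
      fun i _ => subset_convexHull ℝ s (hz i trivial)

end NormedSpace

section InnerProductSpace

variable {E : Type*} [NormedAddCommGroup E] [InnerProductSpace ℝ E]

theorem inner_sub_nonpos_of_norm_eq_infDist {K : Set E} (hK : Convex ℝ K) {x y z : E}
    (hy : y ∈ K) (hxy : ‖x - y‖ = infDist x K) (hz : z ∈ K) : ⟪x - y, z - y⟫ ≤ 0 := by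
  refine (norm_eq_iInf_iff_real_inner_le_zero hK hy).1 ?_ z hz
  simp_rw [hxy, infDist_eq_iInf, dist_eq_norm]

theorem lipschitzWith_one_of_norm_eq_infDist {K : Set E} (hK : Convex ℝ K) {π : E → E}
    (hπ : ∀ x, π x ∈ K ∧ ‖x - π x‖ = infDist x K) : LipschitzWith 1 π := by
  refine LipschitzWith.of_dist_le_mul fun x y => ?_
  rw [NNReal.coe_one, one_mul, dist_eq_norm, dist_eq_norm]
  have hx := inner_sub_nonpos_of_norm_eq_infDist hK (hπ x).1 (hπ x).2 (hπ y).1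
  have hy := inner_sub_nonpos_of_norm_eq_infDist hK (hπ y).1 (hπ y).2 (hπ x).1
  have key : ‖π x - π y‖ ^ 2 ≤ ⟪x - y, π x - π y⟫ := by
    -- sum of the two variational inequalities
    have : ⟪x - π x, π y - π x⟫ + ⟪y - π y, π x - π y⟫
        = ‖π x - π y‖ ^ 2 - ⟪x - y, π x - π y⟫ := by
      simp only [← real_inner_self_eq_norm_sq, inner_sub_left, inner_sub_right,
        real_inner_comm (π x) (π y)]
      ring
    linarith
  have := real_inner_le_norm (x - y) (π x - π y)
  nlinarith [norm_nonneg (π x - π y), norm_nonneg (x - y)]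

theorem exists_forall_lt_zero_of_zero_notMem_convexHull [CompleteSpace E] {G : Set (ℝ × E)}
    (hG : IsClosed (convexHull ℝ G)) (h0 : 0 ∉ convexHull ℝ G) :
    ∃ (t : ℝ) (w : E), ∀ z ∈ G, t * z.1 + ⟪w, z.2⟫ < 0 := by
  obtain ⟨f, u, hfu, hu⟩ := geometric_hahn_banach_closed_point (convex_convexHull ℝ G) hG h0
  refine ⟨f (1, 0), (InnerProductSpace.toDual ℝ E).symm (f ∘L .inr ℝ ℝ E), fun z hz => ?_⟩
  have hf : f z = z.1 * f (1, 0) + f (0, z.2) := by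
    rw [← smul_eq_mul, ← f.map_smul, ← f.map_add, Prod.smul_mk, smul_zero, smul_eq_mul, mul_one,
      Prod.mk_add_mk, add_zero, zero_add]
  rw [InnerProductSpace.toDual_symm_apply, ContinuousLinearMap.comp_apply,
    ContinuousLinearMap.inr_apply, mul_comm, ← hf]
  linarith [hfu z (subset_convexHull ℝ G hz), f.map_zero]

def contactVectors (projP projQ : E → E) (R S : Set E) : Set (ℝ × E) :=
  (fun p => (⟪p - projQ p, p⟫, p - projQ p)) '' R ∪
    (fun q => (⟪projP q - q, projP q⟫, projP q - q)) '' S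

theorem isCompact_contactVectors {projP projQ : E → E} (hπP : Continuous projP)
    (hπQ : Continuous projQ) {R S : Set E} (hR : IsCompact R) (hS : IsCompact S) :
    IsCompact (contactVectors projP projQ R S) :=
  (hR.image (by fun_prop)).union (hS.image (by fun_prop))

theorem sq_add_inner_le_mul_infDist_homothety_left {Q : Set E} (hQ : Convex ℝ Q)
    {projQ : E → E} (hprojQ : ∀ x, projQ x ∈ Q ∧ ‖x - projQ x‖ = infDist x Q)
    {p : E} {ρ : ℝ} (hp : infDist p Q = ρ) (α : ℝ) (c : E) :
    ρ ^ 2 + (α - 1) * ⟪p - projQ p, p⟫ + ⟪p - projQ p, c⟫ ≤ ρ * infDist (α • p + c) Q := by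
  set u := p - projQ p
  set y := projQ (α • p + c)
  have hu : ‖u‖ = ρ := (hprojQ p).2.trans hp
  have hvi : ⟪u, y - projQ p⟫ ≤ 0 :=
    inner_sub_nonpos_of_norm_eq_infDist hQ (hprojQ p).1 (hprojQ p).2 (hprojQ _).1
  have hproj : ⟪u, projQ p⟫ = ⟪u, p⟫ - ρ ^ 2 := by
    rw [← hu, ← real_inner_self_eq_norm_sq, ← inner_sub_right, sub_sub_cancel]
  calc ρ ^ 2 + (α - 1) * ⟪u, p⟫ + ⟪u, c⟫ ≤ ⟪u, α • p + c - y⟫ := by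
        rw [inner_sub_right, inner_add_right, real_inner_smul_right]
        rw [inner_sub_right] at hvi
        linarith
    _ ≤ ‖u‖ * ‖α • p + c - y‖ := real_inner_le_norm _ _
    _ = ρ * infDist (α • p + c) Q := by rw [hu, (hprojQ _).2]

theorem sq_add_inner_le_mul_infDist_homothety_right {P : Set E} (hPc : IsCompact P)
    (hP : Convex ℝ P) {projP : E → E} (hprojP : ∀ x, projP x ∈ P ∧ ‖x - projP x‖ = infDist x P)
    {q : E} {ρ : ℝ} (hq : infDist q P = ρ) {α : ℝ} (hα : 0 ≤ α) (c : E) :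
    ρ ^ 2 + (α - 1) * ⟪projP q - q, projP q⟫ + ⟪projP q - q, c⟫
      ≤ ρ * infDist q ((fun p => α • p + c) '' P) := by
  set v := projP q - q
  have hv : ‖v‖ = ρ := by rw [norm_sub_rev]; exact (hprojP q).2.trans hq
  obtain ⟨_, ⟨p, hp, rfl⟩, hpd⟩ := (hPc.image (f := fun p => α • p + c)
    (by fun_prop)).exists_infDist_eq_dist ((nonempty_of_mem (hprojP q).1).image _) q
  have hvi : ⟪q - projP q, p - projP q⟫ ≤ 0 :=
    inner_sub_nonpos_of_norm_eq_infDist hP (hprojP q).1 (hprojP q).2 hp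
  have hproj : ⟪v, q⟫ = ⟪v, projP q⟫ - ρ ^ 2 := by
    rw [← hv, ← real_inner_self_eq_norm_sq, ← inner_sub_right, sub_sub_cancel]
  have hmono : ⟪v, projP q⟫ ≤ ⟪v, p⟫ := by
    rw [← neg_sub, inner_neg_left, inner_sub_right] at hvi
    linarith
  calc ρ ^ 2 + (α - 1) * ⟪v, projP q⟫ + ⟪v, c⟫ ≤ ⟪v, α • p + c - q⟫ := by
        rw [inner_sub_right, inner_add_right, real_inner_smul_right]
        nlinarith
    _ ≤ ‖v‖ * ‖α • p + c - q‖ := real_inner_le_norm _ _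
    _ = ρ * infDist q ((fun p => α • p + c) '' P) := by rw [hv, hpd, dist_comm, dist_eq_norm]

theorem le_hausdorffDist_homothety_of_zero_mem_convexHull {P Q : Set E} (hPc : IsCompact P)
    (hQb : Bornology.IsBounded Q) (hPconv : Convex ℝ P) (hQconv : Convex ℝ Q)
    {projP projQ : E → E} (hprojP : ∀ x, projP x ∈ P ∧ ‖x - projP x‖ = infDist x P)
    (hprojQ : ∀ x, projQ x ∈ Q ∧ ‖x - projQ x‖ = infDist x Q) {ρ : ℝ} (hρ : 0 ≤ ρ)
    {R S : Set E} (hRP : R ⊆ P) (hSQ : S ⊆ Q) (hRd : ∀ p ∈ R, infDist p Q = ρ)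
    (hSd : ∀ q ∈ S, infDist q P = ρ) (hhull : 0 ∈ convexHull ℝ (contactVectors projP projQ R S))
    {α : ℝ} (hα : 0 ≤ α) (c : E) :
    ρ ≤ hausdorffDist ((fun p => α • p + c) '' P) Q := by
  set img := (fun p => α • p + c) '' P
  set HD := hausdorffDist img Q
  have hfin : hausdorffEDist img Q ≠ ⊤ :=
    hausdorffEDist_ne_top_of_nonempty_of_bounded ((nonempty_of_mem (hprojP 0).1).image _)
      (nonempty_of_mem (hprojQ 0).1) (hPc.image (by fun_prop)).isBounded hQb
  have hlin : IsLinearMap ℝ fun z : ℝ × E => (α - 1) * z.1 + ⟪z.2, c⟫ := by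
    refine ⟨fun z z' => by simp only [Prod.fst_add, Prod.snd_add, inner_add_left]; ring,
      fun a z => by
        simp only [Prod.smul_fst, Prod.smul_snd, real_inner_smul_left, smul_eq_mul]; ring⟩
  have hhalf : convexHull ℝ (contactVectors projP projQ R S)
      ⊆ {z | (α - 1) * z.1 + ⟪z.2, c⟫ ≤ ρ * HD - ρ ^ 2} := by
    refine convexHull_min ?_ (convex_halfSpace_le hlin _)
    rintro _ (⟨p, hp, rfl⟩ | ⟨q, hq, rfl⟩)
    · have := sq_add_inner_le_mul_infDist_homothety_left hQconv hprojQ (hRd p hp) α c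
      have := mul_le_mul_of_nonneg_left
        (infDist_le_hausdorffDist_of_mem (mem_image_of_mem _ (hRP hp)) hfin) hρ
      simp only [mem_ofPred_eq]
      linarith
    · have := sq_add_inner_le_mul_infDist_homothety_right hPc hPconv hprojP (hSd q hq) hα c
      have := mul_le_mul_of_nonneg_left (infDist_le_hausdorffDist_of_mem (hSQ hq)
        (by rwa [hausdorffEDist_comm])) hρ
      rw [hausdorffDist_comm] at this
      simp only [mem_ofPred_eq]
      linarith
  have h0 := hhalf hhull
  simp only [mem_ofPred_eq, Prod.fst_zero, Prod.snd_zero, mul_zero, inner_zero_left,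
    add_zero] at h0
  nlinarith [hausdorffDist_nonneg (s := img) (t := Q)]

theorem norm_add_smul_le_max {v z : E} {ρ δ M s : ℝ} (hs : 0 ≤ s) (hv : ‖v‖ ≤ ρ)
    (hz : ‖z‖ ≤ M) (hsM : s * M ≤ δ / 2) (hsM2 : s * M ^ 2 ≤ δ)
    (h : ‖v‖ ≤ ρ - δ ∨ ⟪v, z⟫ ≤ -δ) :
    ‖v + s • z‖ ≤ max (ρ - δ / 2) √(ρ ^ 2 - s * δ) := by
  rcases h with h | h
  · refine le_max_of_le_left ((norm_add_le _ _).trans ?_)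
    rw [norm_smul, Real.norm_of_nonneg hs]
    nlinarith
  · refine le_max_of_le_right ((abs_norm _).symm.le.trans (Real.abs_le_sqrt ?_))
    have hv2 : ‖v‖ ^ 2 ≤ ρ ^ 2 := pow_le_pow_left₀ (norm_nonneg v) hv 2
    have hz2 : (s * ‖z‖) ^ 2 ≤ s * (s * M ^ 2) := by
      rw [mul_pow, ← mul_assoc, ← sq]
      exact mul_le_mul_of_nonneg_left (pow_le_pow_left₀ (norm_nonneg z) hz 2) (sq_nonneg s)
    rw [norm_add_sq_real, norm_smul, real_inner_smul_right, Real.norm_of_nonneg hs]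
    nlinarith [mul_le_mul_of_nonneg_left h hs, mul_le_mul_of_nonneg_left hsM2 hs]

theorem exists_hausdorffDist_homothety_lt {P Q : Set E} (hP : Bornology.IsBounded P)
    {projP projQ : E → E} (hprojP : ∀ x, projP x ∈ P) (hprojQ : ∀ x, projQ x ∈ Q)
    {ρ δ t : ℝ} {w : E} (hρ : 0 < ρ) (hδ : 0 < δ)
    (hPρ : ∀ p ∈ P, ‖p - projQ p‖ ≤ ρ ∧
      (‖p - projQ p‖ ≤ ρ - δ ∨ ⟪p - projQ p, t • p + w⟫ ≤ -δ))
    (hQρ : ∀ q ∈ Q, ‖projP q - q‖ ≤ ρ ∧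
      (‖projP q - q‖ ≤ ρ - δ ∨ ⟪projP q - q, t • projP q + w⟫ ≤ -δ)) :
    ∃ α : ℝ, 0 < α ∧ ∃ c : E, hausdorffDist ((fun p => α • p + c) '' P) Q < ρ := by
  obtain ⟨r, -, hPr⟩ := hP.exists_pos_norm_le
  obtain ⟨M, hM⟩ : ∃ M, ∀ p ∈ P, ‖t • p + w‖ ≤ M :=
    ⟨|t| * r + ‖w‖, fun p hp => (norm_add_le _ _).trans <| by
      rw [norm_smul, Real.norm_eq_abs]; gcongr; exact hPr p hp⟩
  have hlim (a : ℝ) : Tendsto (fun s => s * a) (𝓝[>] 0) (𝓝 0) :=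
    ((continuous_mul_const a).tendsto' 0 0 (zero_mul a)).mono_left nhdsWithin_le_nhds
  have hsmall : ∀ᶠ s in 𝓝[>] (0 : ℝ), 0 < 1 + s * t ∧ s * M < δ / 2 ∧ s * M ^ 2 < δ :=
    (((hlim t).const_add 1).eventually_const_lt (by norm_num)).and
      (((hlim M).eventually_lt_const (by linarith)).and ((hlim _).eventually_lt_const hδ))
  obtain ⟨s, ⟨hα, hsM, hsM2⟩, hs⟩ := (hsmall.and self_mem_nhdsWithin).exists
  set κ := max (ρ - δ / 2) √(ρ ^ 2 - s * δ)
  have hκ : κ < ρ := max_lt (by linarith) ((Real.sqrt_lt' hρ).2 (by nlinarith [mul_pos hs hδ]))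
  refine ⟨1 + s * t, hα, s • w, (hausdorffDist_le_of_mem_dist
    (le_max_of_le_right (Real.sqrt_nonneg _)) ?_ ?_).trans_lt hκ⟩
  · rintro _ ⟨p, hp, rfl⟩
    refine ⟨projQ p, hprojQ p, ?_⟩
    rw [dist_eq_norm, show (1 + s * t) • p + s • w - projQ p = (p - projQ p) + s • (t • p + w) by
      module]
    exact norm_add_smul_le_max (le_of_lt hs) (hPρ p hp).1 (hM p hp) hsM.le hsM2.le (hPρ p hp).2
  · intro q hq
    refine ⟨_, mem_image_of_mem _ (hprojP q), ?_⟩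
    rw [dist_eq_norm, show q - ((1 + s * t) • projP q + s • w)
      = -((projP q - q) + s • (t • projP q + w)) by module, norm_neg]
    exact norm_add_smul_le_max (le_of_lt hs) (hQρ q hq).1 (hM _ (hprojP q)) hsM.le hsM2.le
      (hQρ q hq).2

theorem zero_mem_convexHull_contactVectors_of_optimal [FiniteDimensional ℝ E] {P Q : Set E}
    (hPc : IsCompact P) (hQc : IsCompact Q) (hPconv : Convex ℝ P) (hQconv : Convex ℝ Q)
    {projP projQ : E → E} (hprojP : ∀ x, projP x ∈ P ∧ ‖x - projP x‖ = infDist x P)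
    (hprojQ : ∀ x, projQ x ∈ Q ∧ ‖x - projQ x‖ = infDist x Q)
    (hopt : ∀ α : ℝ, 0 < α → ∀ c : E,
      hausdorffDist P Q ≤ hausdorffDist ((fun p => α • p + c) '' P) Q) :
    0 ∈ convexHull ℝ (contactVectors projP projQ {p ∈ P | infDist p Q = hausdorffDist P Q}
      {q ∈ Q | infDist q P = hausdorffDist P Q}) := by
  have hfin : hausdorffEDist P Q ≠ ⊤ := hausdorffEDist_ne_top_of_nonempty_of_bounded
    (nonempty_of_mem (hprojP 0).1) (nonempty_of_mem (hprojQ 0).1) hPc.isBounded hQc.isBounded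
  have hPρ (p : E) (hp : p ∈ P) : infDist p Q ≤ hausdorffDist P Q :=
    infDist_le_hausdorffDist_of_mem hp hfin
  have hQρ (q : E) (hq : q ∈ Q) : infDist q P ≤ hausdorffDist P Q :=
    (infDist_le_hausdorffDist_of_mem hq (by rwa [hausdorffEDist_comm])).trans_eq
      hausdorffDist_comm
  have hρ : 0 ≤ hausdorffDist P Q := hausdorffDist_nonneg
  generalize hausdorffDist P Q = ρ at *
  rcases hρ.eq_or_lt with rfl | hρ
  · -- when `ρ = 0`, any point of `P` is a contact point with zero normal
    set p := projP 0
    have hp : infDist p Q = 0 := le_antisymm (hPρ p (hprojP 0).1) infDist_nonneg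
    have hpp : p - projQ p = 0 := norm_eq_zero.1 (by rw [(hprojQ p).2, hp])
    refine subset_convexHull ℝ _ (.inl ⟨p, ⟨(hprojP 0).1, hp⟩, ?_⟩)
    simp only [hpp, inner_zero_left, Prod.mk_zero_zero]
  by_contra h0
  have hπP := (lipschitzWith_one_of_norm_eq_infDist hPconv hprojP).continuous
  have hπQ := (lipschitzWith_one_of_norm_eq_infDist hQconv hprojQ).continuous
  have hG := isCompact_contactVectors hπP hπQ
    (hPc.inter_right (isClosed_eq (continuous_infDist_pt Q) (continuous_const (y := ρ))))
    (hQc.inter_right (isClosed_eq (continuous_infDist_pt P) (continuous_const (y := ρ))))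
  obtain ⟨t, w, htw⟩ := exists_forall_lt_zero_of_zero_notMem_convexHull hG.convexHull.isClosed h0
  have hinner (v x : E) : ⟪v, t • x + w⟫ = t * ⟪v, x⟫ + ⟪w, v⟫ := by
    rw [inner_add_right, real_inner_smul_right, real_inner_comm v w]
  obtain ⟨δ₁, hδ₁, h₁⟩ := hPc.exists_forall_le_sub_or_le_neg
    (continuous_infDist_pt Q).continuousOn (ψ := fun p => ⟪p - projQ p, t • p + w⟫)
    (by fun_prop) hPρ fun p hp hpρ => by
      simpa only [hinner] using htw _ (.inl ⟨p, ⟨hp, hpρ⟩, rfl⟩)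
  obtain ⟨δ₂, hδ₂, h₂⟩ := hQc.exists_forall_le_sub_or_le_neg
    (continuous_infDist_pt P).continuousOn (ψ := fun q => ⟪projP q - q, t • projP q + w⟫)
    (by fun_prop) hQρ fun q hq hqρ => by
      simpa only [hinner] using htw _ (.inr ⟨q, ⟨hq, hqρ⟩, rfl⟩)
  have hweak {a b δ : ℝ} (hδ : min δ₁ δ₂ ≤ δ) :
      a ≤ ρ - δ ∨ b ≤ -δ → a ≤ ρ - min δ₁ δ₂ ∨ b ≤ -min δ₁ δ₂ :=
    Or.imp (fun h => by linarith) fun h => by linarith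
  obtain ⟨α, hα, c, hlt⟩ := exists_hausdorffDist_homothety_lt hPc.isBounded (fun x => (hprojP x).1)
    (fun x => (hprojQ x).1) hρ (lt_min hδ₁ hδ₂) (w := w) (t := t)
    (fun p hp => (hprojQ p).2 ▸ ⟨hPρ p hp, hweak (min_le_left _ _) (h₁ p hp)⟩)
    (fun q hq => norm_sub_rev q _ ▸ (hprojP q).2 ▸ ⟨hQρ q hq, hweak (min_le_right _ _) (h₂ q hq)⟩)
  exact (hopt α hα c).not_gt hlt

end InnerProductSpace

theorem optimal_homothetic_position_iff_general
    (d : ℕ) (P Q : Set (EuclideanSpace ℝ (Fin d)))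
    (hPc : IsCompact P) (hQc : IsCompact Q)
    (hPconv : Convex ℝ P) (hQconv : Convex ℝ Q)
    (projP projQ : EuclideanSpace ℝ (Fin d) → EuclideanSpace ℝ (Fin d))
    (hprojP : ∀ x, projP x ∈ P ∧ ‖x - projP x‖ = Metric.infDist x P)
    (hprojQ : ∀ x, projQ x ∈ Q ∧ ‖x - projQ x‖ = Metric.infDist x Q) :
    (Metric.hausdorffDist P Q
        = sInf {ρ : ℝ | ∃ α : ℝ, 0 < α ∧ ∃ c : EuclideanSpace ℝ (Fin d),
            ρ = Metric.hausdorffDist ((fun p => α • p + c) '' P) Q})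
      ↔ ∃ ρ : ℝ, 0 ≤ ρ ∧ ∃ R S : Finset (EuclideanSpace ℝ (Fin d)),
          ↑R ⊆ P ∧ ↑S ⊆ Q ∧ R.card + S.card ≤ d + 2 ∧
          P ⊆ Q + ρ • Metric.closedBall (0 : EuclideanSpace ℝ (Fin d)) 1 ∧
          Q ⊆ P + ρ • Metric.closedBall (0 : EuclideanSpace ℝ (Fin d)) 1 ∧
          (∀ p ∈ R, Metric.infDist p Q = ρ) ∧
          (∀ q ∈ S, Metric.infDist q P = ρ) ∧
          (0 : ℝ × EuclideanSpace ℝ (Fin d)) ∈ convexHull ℝ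
            ((fun p => (⟪p - projQ p, p⟫, p - projQ p)) '' ↑R ∪
             (fun q => (⟪projP q - q, projP q⟫, projP q - q)) '' ↑S) := by
  rw [hausdorffDist_eq_sInf_iff]
  constructor
  · intro hopt
    obtain ⟨t, hts, htcard, h0t⟩ := exists_finset_card_le_finrank_mem_convexHull
      (zero_mem_convexHull_contactVectors_of_optimal hPc hQc hPconv hQconv hprojP hprojQ hopt)
    obtain ⟨R, S, hRA, hSB, hcard, hcover⟩ :=
      Finset.exists_card_add_card_le_of_subset_image_union hts
    have hρ : 0 ≤ hausdorffDist P Q := hausdorffDist_nonneg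
    refine ⟨_, hρ, R, S, fun p hp => (hRA hp).1, fun q hq => (hSB hq).1, ?_,
      (subset_add_smul_unitClosedBall_iff hρ).2 fun p hp =>
        exists_dist_le_hausdorffDist hPc.isBounded hQc ⟨_, (hprojQ 0).1⟩ hp,
      (subset_add_smul_unitClosedBall_iff hρ).2 fun q hq => hausdorffDist_comm (s := Q) ▸
        exists_dist_le_hausdorffDist hQc.isBounded hPc ⟨_, (hprojP 0).1⟩ hq,
      fun p hp => (hRA hp).2, fun q hq => (hSB hq).2, convexHull_mono hcover h0t⟩
    have := hcard.trans htcard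
    simp only [Module.finrank_prod, Module.finrank_self, finrank_euclideanSpace_fin] at this
    omega
  · rintro ⟨ρ, hρ, R, S, hRP, hSQ, -, hPQ, hQP, hRd, hSd, hhull⟩ α hα c
    exact (hausdorffDist_le_of_mem_dist hρ ((subset_add_smul_unitClosedBall_iff hρ).1 hPQ)
      ((subset_add_smul_unitClosedBall_iff hρ).1 hQP)).trans
      (le_hausdorffDist_homothety_of_zero_mem_convexHull hPc hQc.isBounded hPconv hQconv hprojP
        hprojQ hρ hRP hSQ hRd hSd hhull hα.le c)

/-- **Optimality criterion for Hausdorff matching under homothetics.**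
Let `P, Q ⊆ ℝ^d` be convex bodies with `0` in their interiors. Then `P` is in optimal
homothetic position w.r.t. `Q` (i.e. `δ₂(P,Q) = δ_H(P,Q) := inf { δ₂(αP + c, Q) : α > 0, c }`)
iff there exist `ρ ≥ 0` and finite `R ⊆ P`, `S ⊆ Q` with `|R| + |S| ≤ d + 2` such that
(1) `P ⊆ Q + ρB₂` and `Q ⊆ P + ρB₂`;
(2) `d₂(p,Q) = ρ` for all `p ∈ R` and `d₂(q,P) = ρ` for all `q ∈ S`;
(3) `0 ∈ conv({(⟪p − Π_Q p, p⟫, p − Π_Q p) : p ∈ R} ∪ {(⟪Π_P q − q, Π_P q⟫, Π_P q − q) : q ∈ S})`. -/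
theorem optimal_homothetic_position_iff
    (d : ℕ) (P Q : Set (EuclideanSpace ℝ (Fin d)))
    (hPc : IsCompact P) (hQc : IsCompact Q)
    (hPconv : Convex ℝ P) (hQconv : Convex ℝ Q)
    (h0P : (0 : EuclideanSpace ℝ (Fin d)) ∈ interior P)
    (h0Q : (0 : EuclideanSpace ℝ (Fin d)) ∈ interior Q)
    (projP projQ : EuclideanSpace ℝ (Fin d) → EuclideanSpace ℝ (Fin d))
    (hprojP : ∀ x, projP x ∈ P ∧ ‖x - projP x‖ = Metric.infDist x P)
    (hprojQ : ∀ x, projQ x ∈ Q ∧ ‖x - projQ x‖ = Metric.infDist x Q) :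
    (Metric.hausdorffDist P Q
        = sInf {ρ : ℝ | ∃ α : ℝ, 0 < α ∧ ∃ c : EuclideanSpace ℝ (Fin d),
            ρ = Metric.hausdorffDist ((fun p => α • p + c) '' P) Q})
      ↔ ∃ ρ : ℝ, 0 ≤ ρ ∧ ∃ R S : Finset (EuclideanSpace ℝ (Fin d)),
          ↑R ⊆ P ∧ ↑S ⊆ Q ∧ R.card + S.card ≤ d + 2 ∧
          P ⊆ Q + ρ • Metric.closedBall (0 : EuclideanSpace ℝ (Fin d)) 1 ∧
          Q ⊆ P + ρ • Metric.closedBall (0 : EuclideanSpace ℝ (Fin d)) 1 ∧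
          (∀ p ∈ R, Metric.infDist p Q = ρ) ∧
          (∀ q ∈ S, Metric.infDist q P = ρ) ∧
          (0 : ℝ × EuclideanSpace ℝ (Fin d)) ∈ convexHull ℝ
            ((fun p => (⟪p - projQ p, p⟫, p - projQ p)) '' ↑R ∪
             (fun q => (⟪projP q - q, projP q⟫, projP q - q)) '' ↑S) :=
  optimal_homothetic_position_iff_general d P Q hPc hQc hPconv hQconv projP projQ hprojP hprojQ
end

section
/- Let P, Q ⊆ ℝ^d (Euclidean) be convex bodies containing the origin in their interiors, and set ᾱ := D(Q)/D(P) and c̄ := r(Q) − ᾱ·r(P). Then δ₂( ᾱP + c̄ , Q ) ≤ (3√d + 1) · δ_H(P,Q). -/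
/-- The "lower left" corner `r(P)` of the bounding box of `P`: `r(P)_i = min_{x ∈ P} x_i`. -/
noncomputable def bboxLower {d : ℕ} (P : Set (EuclideanSpace ℝ (Fin d))) :
    EuclideanSpace ℝ (Fin d) :=
  WithLp.toLp 2 fun i => sInf ((fun x => x i) '' P)

/-- The "upper right" corner `s(P)` of the bounding box of `P`: `s(P)_i = max_{x ∈ P} x_i`. -/
noncomputable def bboxUpper {d : ℕ} (P : Set (EuclideanSpace ℝ (Fin d))) :
    EuclideanSpace ℝ (Fin d) :=
  WithLp.toLp 2 fun i => sSup ((fun x => x i) '' P)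

/-- The diameter `D(P) = ‖s(P) − r(P)‖₂` of the bounding box of `P`. -/
noncomputable def bboxDiam {d : ℕ} (P : Set (EuclideanSpace ℝ (Fin d))) : ℝ :=
  ‖bboxUpper P - bboxLower P‖

/-- The Hausdorff distance up to homothetics:
`δ_H(A,B) = inf { δ₂(αA + c, B) : α > 0, c ∈ ℝ^d }`. -/
noncomputable def deltaH {d : ℕ} (A B : Set (EuclideanSpace ℝ (Fin d))) : ℝ :=
  sInf {ρ : ℝ | ∃ α : ℝ, 0 < α ∧ ∃ c : EuclideanSpace ℝ (Fin d),
    ρ = Metric.hausdorffDist ((fun a => α • a + c) '' A) B}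


/-!
The set `bboxHomothety P Q '' P` does not change when `P` is replaced by a positive homothet
`A = αP + c`, so it suffices to show that `bboxHomothety A Q` moves the points of `A` by at most
`3√d · δ₂(A, Q)`. Each bounding-box coordinate is the extremum of a 1-Lipschitz function, hence
moves by at most `δ₂(A, Q)`; thus `‖r(Q) − r(A)‖ ≤ √d δ₂(A, Q)` and `|D(Q) − D(A)| ≤ 2√d δ₂(A, Q)`,
and a point `a ∈ A` is moved by `(D(Q)/D(A) − 1)(a − r(A)) + (r(Q) − r(A))`, where
`‖a − r(A)‖ ≤ D(A)`. The triangle inequality adds the remaining `δ₂(A, Q)`.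
-/

open Metric

theorem abs_div_sub_one_mul_le {a b : ℝ} (hb : 0 ≤ b) : |a / b - 1| * b ≤ |a - b| := by
  rcases hb.eq_or_lt with rfl | hb
  · simp
  · rw [← abs_of_pos hb, ← abs_mul, abs_of_pos hb, sub_mul, div_mul_cancel₀ a hb.ne', one_mul]

namespace EuclideanSpace

variable {ι : Type*} [Fintype ι]

theorem norm_le_sqrt_card_mul {u : EuclideanSpace ℝ ι} {C : ℝ} (hC : 0 ≤ C)
    (h : ∀ i, |u i| ≤ C) : ‖u‖ ≤ √(Fintype.card ι) * C := by
  have hsum : ∑ i, ‖u i‖ ^ 2 ≤ Fintype.card ι * C ^ 2 := by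
    calc ∑ i, ‖u i‖ ^ 2 ≤ ∑ _i : ι, C ^ 2 :=
          Finset.sum_le_sum fun i _ => by simpa using pow_le_pow_left₀ (abs_nonneg _) (h i) 2
      _ = Fintype.card ι * C ^ 2 := by simp
  calc ‖u‖ = √(∑ i, ‖u i‖ ^ 2) := norm_eq u
    _ ≤ √(Fintype.card ι * C ^ 2) := Real.sqrt_le_sqrt hsum
    _ = √(Fintype.card ι) * C := by rw [Real.sqrt_mul (Nat.cast_nonneg _), Real.sqrt_sq hC]

theorem norm_le_norm_of_forall_abs_apply_le {u v : EuclideanSpace ℝ ι}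
    (h : ∀ i, |u i| ≤ |v i|) : ‖u‖ ≤ ‖v‖ := by
  rw [norm_eq, norm_eq]
  gcongr with i
  simpa using h i

theorem lipschitzWith_apply (i : ι) : LipschitzWith 1 fun x : EuclideanSpace ℝ ι => x i :=
  LipschitzWith.of_dist_le_mul fun x y => by simpa using PiLp.dist_apply_le x y i

end EuclideanSpace

section LipschitzExtrema

variable {X : Type*} [PseudoMetricSpace X] {f : X → ℝ} {A B : Set X}

theorem LipschitzWith.sInf_image_le_add_hausdorffDist (hf : LipschitzWith 1 f)
    (hA : IsCompact A) (hAne : A.Nonempty) (hB : Bornology.IsBounded B) (hBne : B.Nonempty) :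
    sInf (f '' A) ≤ sInf (f '' B) + hausdorffDist A B := by
  rw [← sub_le_iff_le_add]
  refine le_csInf (hBne.image f) ?_
  rintro _ ⟨b, hb, rfl⟩
  obtain ⟨a, ha, hab⟩ := hA.exists_infDist_eq_dist hAne b
  have hclose : dist b a ≤ hausdorffDist A B := by
    rw [← hab, hausdorffDist_comm]
    exact infDist_le_hausdorffDist_of_mem hb
      (hausdorffEDist_ne_top_of_nonempty_of_bounded hBne hAne hB hA.isBounded)
  have hfab : f a - f b ≤ dist b a := by
    simpa [dist_comm b] using (abs_le.mp (hf.dist_le_mul a b)).2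
  linarith [csInf_le (hA.image hf.continuous).bddBelow (Set.mem_image_of_mem f ha)]

theorem LipschitzWith.sSup_image_le_add_hausdorffDist (hf : LipschitzWith 1 f)
    (hA : IsCompact A) (hAne : A.Nonempty) (hB : Bornology.IsBounded B) (hBne : B.Nonempty) :
    sSup (f '' B) ≤ sSup (f '' A) + hausdorffDist A B := by
  refine csSup_le (hBne.image f) ?_
  rintro _ ⟨b, hb, rfl⟩
  obtain ⟨a, ha, hab⟩ := hA.exists_infDist_eq_dist hAne b
  have hclose : dist b a ≤ hausdorffDist A B := by
    rw [← hab, hausdorffDist_comm]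
    exact infDist_le_hausdorffDist_of_mem hb
      (hausdorffEDist_ne_top_of_nonempty_of_bounded hBne hAne hB hA.isBounded)
  have hfab : f b - f a ≤ dist b a := (abs_le.mp (hf.dist_le_mul b a)).2.trans (by simp)
  linarith [le_csSup (hA.image hf.continuous).bddAbove (Set.mem_image_of_mem f ha)]

theorem LipschitzWith.abs_sInf_image_sub_le_hausdorffDist (hf : LipschitzWith 1 f)
    (hA : IsCompact A) (hAne : A.Nonempty) (hB : IsCompact B) (hBne : B.Nonempty) :
    |sInf (f '' A) - sInf (f '' B)| ≤ hausdorffDist A B := by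
  have h₁ := hf.sInf_image_le_add_hausdorffDist hA hAne hB.isBounded hBne
  have h₂ := hf.sInf_image_le_add_hausdorffDist hB hBne hA.isBounded hAne
  rw [hausdorffDist_comm] at h₂
  exact abs_sub_le_iff.mpr ⟨by linarith, by linarith⟩

theorem LipschitzWith.abs_sSup_image_sub_le_hausdorffDist (hf : LipschitzWith 1 f)
    (hA : IsCompact A) (hAne : A.Nonempty) (hB : IsCompact B) (hBne : B.Nonempty) :
    |sSup (f '' A) - sSup (f '' B)| ≤ hausdorffDist A B := by
  have h₁ := hf.sSup_image_le_add_hausdorffDist hA hAne hB.isBounded hBne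
  have h₂ := hf.sSup_image_le_add_hausdorffDist hB hBne hA.isBounded hAne
  rw [hausdorffDist_comm] at h₂
  exact abs_sub_le_iff.mpr ⟨by linarith, by linarith⟩

end LipschitzExtrema

theorem Metric.hausdorffDist_image_le_of_dist_le {X : Type*} [PseudoMetricSpace X] {f : X → X}
    {A : Set X} {r : ℝ} (hr : 0 ≤ r) (h : ∀ a ∈ A, dist (f a) a ≤ r) :
    hausdorffDist (f '' A) A ≤ r :=
  hausdorffDist_le_of_mem_dist hr (by rintro _ ⟨a, ha, rfl⟩; exact ⟨a, ha, h a ha⟩)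
    fun a ha => ⟨f a, Set.mem_image_of_mem f ha, dist_comm a (f a) ▸ h a ha⟩

section BoundingBox

variable {d : ℕ} {A B P : Set (EuclideanSpace ℝ (Fin d))}

theorem bboxLower_apply_le (hP : IsCompact P) {x : EuclideanSpace ℝ (Fin d)} (hx : x ∈ P)
    (i : Fin d) : bboxLower P i ≤ x i :=
  csInf_le (hP.image (EuclideanSpace.lipschitzWith_apply i).continuous).bddBelow ⟨x, hx, rfl⟩

theorem apply_le_bboxUpper (hP : IsCompact P) {x : EuclideanSpace ℝ (Fin d)} (hx : x ∈ P)
    (i : Fin d) : x i ≤ bboxUpper P i :=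
  le_csSup (hP.image (EuclideanSpace.lipschitzWith_apply i).continuous).bddAbove ⟨x, hx, rfl⟩

theorem norm_sub_bboxLower_le_bboxDiam (hP : IsCompact P) {x : EuclideanSpace ℝ (Fin d)}
    (hx : x ∈ P) : ‖x - bboxLower P‖ ≤ bboxDiam P := by
  refine EuclideanSpace.norm_le_norm_of_forall_abs_apply_le fun i => ?_
  have h₁ := bboxLower_apply_le hP hx i
  have h₂ := apply_le_bboxUpper hP hx i
  simp only [PiLp.sub_apply]
  rw [abs_of_nonneg (by linarith), abs_of_nonneg (by linarith)]
  linarith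

theorem norm_bboxLower_sub_le (hA : IsCompact A) (hAne : A.Nonempty) (hB : IsCompact B)
    (hBne : B.Nonempty) : ‖bboxLower A - bboxLower B‖ ≤ √d * hausdorffDist A B := by
  simpa using EuclideanSpace.norm_le_sqrt_card_mul hausdorffDist_nonneg fun i =>
    (EuclideanSpace.lipschitzWith_apply i).abs_sInf_image_sub_le_hausdorffDist hA hAne hB hBne

theorem norm_bboxUpper_sub_le (hA : IsCompact A) (hAne : A.Nonempty) (hB : IsCompact B)
    (hBne : B.Nonempty) : ‖bboxUpper A - bboxUpper B‖ ≤ √d * hausdorffDist A B := by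
  simpa using EuclideanSpace.norm_le_sqrt_card_mul hausdorffDist_nonneg fun i =>
    (EuclideanSpace.lipschitzWith_apply i).abs_sSup_image_sub_le_hausdorffDist hA hAne hB hBne

theorem abs_bboxDiam_sub_le (hA : IsCompact A) (hAne : A.Nonempty) (hB : IsCompact B)
    (hBne : B.Nonempty) : |bboxDiam A - bboxDiam B| ≤ 2 * √d * hausdorffDist A B := by
  have hsplit : (bboxUpper A - bboxLower A) - (bboxUpper B - bboxLower B)
      = (bboxUpper A - bboxUpper B) - (bboxLower A - bboxLower B) := by abel
  calc |bboxDiam A - bboxDiam B|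
      ≤ ‖(bboxUpper A - bboxLower A) - (bboxUpper B - bboxLower B)‖ := abs_norm_sub_norm_le _ _
    _ ≤ ‖bboxUpper A - bboxUpper B‖ + ‖bboxLower A - bboxLower B‖ := hsplit ▸ norm_sub_le _ _
    _ ≤ 2 * √d * hausdorffDist A B := by
      linarith [norm_bboxUpper_sub_le hA hAne hB hBne, norm_bboxLower_sub_le hA hAne hB hBne]

theorem bboxLower_homothety (hP : IsCompact P) (hne : P.Nonempty) {α : ℝ} (hα : 0 ≤ α)
    (c : EuclideanSpace ℝ (Fin d)) :
    bboxLower ((fun x => α • x + c) '' P) = α • bboxLower P + c := by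
  ext i
  simp only [bboxLower, PiLp.toLp_apply, PiLp.add_apply, PiLp.smul_apply, smul_eq_mul]
  have himage : (fun x => x i) '' ((fun x => α • x + c) '' P)
      = (fun y => α * y + c i) '' ((fun x => x i) '' P) := by
    simp [Set.image_image]
  rw [himage, ← Monotone.map_csInf_of_continuousAt (by fun_prop) (fun _ _ h => by gcongr)
    (hne.image _) (hP.image (EuclideanSpace.lipschitzWith_apply i).continuous).bddBelow]

theorem bboxUpper_homothety (hP : IsCompact P) (hne : P.Nonempty) {α : ℝ} (hα : 0 ≤ α)
    (c : EuclideanSpace ℝ (Fin d)) :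
    bboxUpper ((fun x => α • x + c) '' P) = α • bboxUpper P + c := by
  ext i
  simp only [bboxUpper, PiLp.toLp_apply, PiLp.add_apply, PiLp.smul_apply, smul_eq_mul]
  have himage : (fun x => x i) '' ((fun x => α • x + c) '' P)
      = (fun y => α * y + c i) '' ((fun x => x i) '' P) := by
    simp [Set.image_image]
  rw [himage, ← Monotone.map_csSup_of_continuousAt (by fun_prop) (fun _ _ h => by gcongr)
    (hne.image _) (hP.image (EuclideanSpace.lipschitzWith_apply i).continuous).bddAbove]

theorem bboxDiam_homothety (hP : IsCompact P) (hne : P.Nonempty) {α : ℝ} (hα : 0 ≤ α)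
    (c : EuclideanSpace ℝ (Fin d)) :
    bboxDiam ((fun x => α • x + c) '' P) = α * bboxDiam P := by
  rw [bboxDiam, bboxUpper_homothety hP hne hα, bboxLower_homothety hP hne hα,
    add_sub_add_right_eq_sub, ← smul_sub, norm_smul, Real.norm_of_nonneg hα, bboxDiam]

end BoundingBox

section BboxHomothety

variable {d : ℕ}

noncomputable def bboxHomothety (P Q : Set (EuclideanSpace ℝ (Fin d))) :
    EuclideanSpace ℝ (Fin d) → EuclideanSpace ℝ (Fin d) :=
  fun p => (bboxDiam Q / bboxDiam P) • p
    + (bboxLower Q - (bboxDiam Q / bboxDiam P) • bboxLower P)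

variable {A P Q : Set (EuclideanSpace ℝ (Fin d))}

theorem bboxHomothety_image_homothety (hP : IsCompact P) (hne : P.Nonempty) {α : ℝ}
    (hα : 0 < α) (c : EuclideanSpace ℝ (Fin d)) :
    bboxHomothety ((fun x => α • x + c) '' P) Q '' ((fun x => α • x + c) '' P)
      = bboxHomothety P Q '' P := by
  rw [Set.image_image]
  refine Set.image_congr fun p _ => ?_
  have hratio : bboxDiam Q / (α * bboxDiam P) * α = bboxDiam Q / bboxDiam P := by
    rw [mul_comm α, ← div_div, div_mul_cancel₀ _ hα.ne']
  simp only [bboxHomothety, bboxDiam_homothety hP hne hα.le, bboxLower_homothety hP hne hα.le]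
  rw [← hratio]
  module

theorem dist_bboxHomothety_le (hA : IsCompact A) {a : EuclideanSpace ℝ (Fin d)} (ha : a ∈ A) :
    dist (bboxHomothety A Q a) a ≤ |bboxDiam Q - bboxDiam A| + ‖bboxLower Q - bboxLower A‖ := by
  set β := bboxDiam Q / bboxDiam A
  have hsplit : bboxHomothety A Q a - a
      = (β - 1) • (a - bboxLower A) + (bboxLower Q - bboxLower A) := by
    simp only [bboxHomothety, β]
    module
  have hscale : |β - 1| * ‖a - bboxLower A‖ ≤ |bboxDiam Q - bboxDiam A| :=
    (mul_le_mul_of_nonneg_left (norm_sub_bboxLower_le_bboxDiam hA ha) (abs_nonneg _)).trans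
      (abs_div_sub_one_mul_le (norm_nonneg _))
  rw [dist_eq_norm, hsplit]
  refine (norm_add_le _ _).trans ?_
  rw [norm_smul, Real.norm_eq_abs]
  linarith

theorem hausdorffDist_bboxHomothety_image_le (hA : IsCompact A) (hAne : A.Nonempty)
    (hQ : IsCompact Q) (hQne : Q.Nonempty) :
    hausdorffDist (bboxHomothety A Q '' A) Q ≤ (3 * √d + 1) * hausdorffDist A Q := by
  have hmove : hausdorffDist (bboxHomothety A Q '' A) A ≤ 3 * √d * hausdorffDist A Q := by
    refine hausdorffDist_image_le_of_dist_le (mul_nonneg (by positivity) hausdorffDist_nonneg)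
      fun a ha => (dist_bboxHomothety_le hA ha).trans ?_
    rw [abs_sub_comm, norm_sub_rev]
    linarith [abs_bboxDiam_sub_le hA hAne hQ hQne, norm_bboxLower_sub_le hA hAne hQ hQne]
  have hcont : Continuous (bboxHomothety A Q) := by unfold bboxHomothety; fun_prop
  have hfin : hausdorffEDist (bboxHomothety A Q '' A) A ≠ ⊤ :=
    hausdorffEDist_ne_top_of_nonempty_of_bounded (hAne.image _) hAne
      (hA.image hcont).isBounded hA.isBounded
  linarith [hausdorffDist_triangle hfin (u := Q)]

end BboxHomothety

theorem reference_point_approximation_general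
    (d : ℕ) (P Q : Set (EuclideanSpace ℝ (Fin d)))
    (hPc : IsCompact P) (hQc : IsCompact Q)
    (h0P : (0 : EuclideanSpace ℝ (Fin d)) ∈ interior P)
    (h0Q : (0 : EuclideanSpace ℝ (Fin d)) ∈ interior Q) :
    Metric.hausdorffDist
        ((fun p => (bboxDiam Q / bboxDiam P) • p
            + (bboxLower Q - (bboxDiam Q / bboxDiam P) • bboxLower P)) '' P) Q
      ≤ (3 * Real.sqrt d + 1) * deltaH P Q := by
  have hPne : P.Nonempty := ⟨0, interior_subset h0P⟩
  have hQne : Q.Nonempty := ⟨0, interior_subset h0Q⟩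
  have hK : (0 : ℝ) < 3 * √d + 1 := by positivity
  set S := {ρ : ℝ | ∃ α : ℝ, 0 < α ∧ ∃ c : EuclideanSpace ℝ (Fin d),
    ρ = hausdorffDist ((fun a => α • a + c) '' P) Q}
  have hSne : S.Nonempty := ⟨_, 1, one_pos, 0, rfl⟩
  have hbound : ∀ ρ ∈ S, hausdorffDist (bboxHomothety P Q '' P) Q ≤ (3 * √d + 1) * ρ := by
    rintro _ ⟨α, hα, c, rfl⟩
    rw [← bboxHomothety_image_homothety hPc hPne hα c]
    exact hausdorffDist_bboxHomothety_image_le (hPc.image (by fun_prop)) (hPne.image _) hQc hQne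
  show _ ≤ _ * sInf S
  exact (div_le_iff₀' hK).mp <| le_csInf hSne fun ρ hρ => (div_le_iff₀' hK).mpr (hbound ρ hρ)

/-- **Approximation by reference points.**
For convex bodies `P, Q ⊆ ℝ^d` with `0` in their interiors, setting
`ᾱ := D(Q)/D(P)` and `c̄ := r(Q) − ᾱ·r(P)`, one has
`δ₂(ᾱP + c̄, Q) ≤ (3√d + 1) · δ_H(P,Q)`. -/
theorem reference_point_approximation
    (d : ℕ) (P Q : Set (EuclideanSpace ℝ (Fin d)))
    (hPc : IsCompact P) (hQc : IsCompact Q)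
    (hPconv : Convex ℝ P) (hQconv : Convex ℝ Q)
    (h0P : (0 : EuclideanSpace ℝ (Fin d)) ∈ interior P)
    (h0Q : (0 : EuclideanSpace ℝ (Fin d)) ∈ interior Q) :
    Metric.hausdorffDist
        ((fun p => (bboxDiam Q / bboxDiam P) • p
            + (bboxLower Q - (bboxDiam Q / bboxDiam P) • bboxLower P)) '' P) Q
      ≤ (3 * Real.sqrt d + 1) * deltaH P Q :=
  reference_point_approximation_general d P Q hPc hQc h0P h0Q
end

section
/- Let P, Q ⊆ ℝ^d (Euclidean) be nonempty compact convex sets. Then the objective function of the homothetic Hausdorff matching problem, F : (0,∞) × ℝ^d → [0,∞), F(α,c) := δ₂(αP + c, Q), is convex on (0,∞) × ℝ^d. -/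
/-! For convex `P` and `α₁, α₂ ≥ 0`, a convex combination of the homothets `αᵢP + cᵢ` is again a
homothet of `P`, with the combined parameters (`(tα₁ + sα₂)P = tα₁P + sα₂P`). So it suffices that
`S ↦ δ(S, Q)` is convex under Minkowski combinations when `Q` is convex: a point of `tS₁ + sS₂` is
close to the matching combination of near points of `Q` (which lies in `Q`), and a point `y ∈ Q`,
written as `ty + sy`, is close to the combination of its near points in `S₁` and `S₂`. -/

open Metric Set
open scoped Pointwise

section Minkowski

variable {E : Type*} [NormedAddCommGroup E] [NormedSpace ℝ E] {t s : ℝ}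

theorem infDist_add_smul_le {A B C : Set E} (hA : A.Nonempty) (hB : B.Nonempty)
    (hABC : t • A + s • B ⊆ C) (ht : 0 ≤ t) (hs : 0 ≤ s) (hts : t + s = 1) (x y : E) :
    infDist (t • x + s • y) C ≤ t * infDist x A + s * infDist y B := by
  refine le_of_forall_pos_le_add fun ε hε => ?_
  obtain ⟨a, ha, hxa⟩ := (infDist_lt_iff hA).1 (lt_add_of_pos_right (infDist x A) hε)
  obtain ⟨b, hb, hyb⟩ := (infDist_lt_iff hB).1 (lt_add_of_pos_right (infDist y B) hε)
  calc infDist (t • x + s • y) C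
      ≤ dist (t • x + s • y) (t • a + s • b) :=
        infDist_le_dist_of_mem (hABC (add_mem_add (smul_mem_smul_set ha) (smul_mem_smul_set hb)))
    _ ≤ t * dist x a + s * dist y b := by
        grw [dist_add_add_le, dist_smul₀, dist_smul₀, Real.norm_of_nonneg ht,
          Real.norm_of_nonneg hs]
    _ ≤ t * (infDist x A + ε) + s * (infDist y B + ε) := by gcongr
    _ = t * infDist x A + s * infDist y B + ε := by linear_combination ε * hts

theorem hausdorffDist_add_smul_le {S₁ S₂ T : Set E} (hS₁ : S₁.Nonempty) (hS₂ : S₂.Nonempty)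
    (hT : T.Nonempty) (hS₁b : Bornology.IsBounded S₁) (hS₂b : Bornology.IsBounded S₂)
    (hTb : Bornology.IsBounded T) (hTconv : Convex ℝ T) (ht : 0 ≤ t) (hs : 0 ≤ s)
    (hts : t + s = 1) :
    hausdorffDist (t • S₁ + s • S₂) T ≤ t * hausdorffDist S₁ T + s * hausdorffDist S₂ T := by
  have fin₁ := hausdorffEDist_ne_top_of_nonempty_of_bounded hS₁ hT hS₁b hTb
  have fin₂ := hausdorffEDist_ne_top_of_nonempty_of_bounded hS₂ hT hS₂b hTb
  refine hausdorffDist_le_of_infDist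
    (add_nonneg (mul_nonneg ht hausdorffDist_nonneg) (mul_nonneg hs hausdorffDist_nonneg)) ?_ ?_
  · rintro _ ⟨_, ⟨x₁, hx₁, rfl⟩, _, ⟨x₂, hx₂, rfl⟩, rfl⟩
    grw [infDist_add_smul_le hT hT (convex_iff_pointwise_add_subset.1 hTconv ht hs hts) ht hs hts,
      infDist_le_hausdorffDist_of_mem hx₁ fin₁, infDist_le_hausdorffDist_of_mem hx₂ fin₂]
  · intro y hy
    rw [hausdorffDist_comm, hausdorffDist_comm (s := S₂)]
    rw [hausdorffEDist_comm] at fin₁ fin₂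
    calc infDist y (t • S₁ + s • S₂)
        = infDist (t • y + s • y) (t • S₁ + s • S₂) := by rw [← add_smul, hts, one_smul]
      _ ≤ t * infDist y S₁ + s * infDist y S₂ := infDist_add_smul_le hS₁ hS₂ le_rfl ht hs hts y y
      _ ≤ t * hausdorffDist T S₁ + s * hausdorffDist T S₂ := by
        grw [infDist_le_hausdorffDist_of_mem hy fin₁, infDist_le_hausdorffDist_of_mem hy fin₂]

end Minkowski

theorem Convex.image_homothety_add_smul {E : Type*} [AddCommGroup E] [Module ℝ E] {P : Set E}
    (hP : Convex ℝ P) {α₁ α₂ t s : ℝ} (hα₁ : 0 ≤ α₁) (hα₂ : 0 ≤ α₂) (ht : 0 ≤ t) (hs : 0 ≤ s)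
    (c₁ c₂ : E) :
    (fun p => (t * α₁ + s * α₂) • p + (t • c₁ + s • c₂)) '' P =
      t • ((fun p => α₁ • p + c₁) '' P) + s • ((fun p => α₂ • p + c₂) '' P) := by
  ext x
  constructor
  · rintro ⟨p, hp, rfl⟩
    exact ⟨_, smul_mem_smul_set ⟨p, hp, rfl⟩, _, smul_mem_smul_set ⟨p, hp, rfl⟩, by module⟩
  · rintro ⟨_, ⟨_, ⟨p₁, hp₁, rfl⟩, rfl⟩, _, ⟨_, ⟨p₂, hp₂, rfl⟩, rfl⟩, rfl⟩
    obtain ⟨p, hp, hcombo⟩ :=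
      hP.exists_mem_add_smul_eq hp₁ hp₂ (mul_nonneg ht hα₁) (mul_nonneg hs hα₂)
    refine ⟨p, hp, ?_⟩
    simp only [hcombo]
    module

/-- **Convexity of the objective function of the homothetic Hausdorff matching problem.**
Let `P, Q ⊆ ℝ^d` be nonempty compact convex sets. Then
`F(α,c) := δ₂(αP + c, Q)` is convex on `(0,∞) × ℝ^d`. -/
theorem convexOn_hausdorffDist_homothet
    (d : ℕ) (P Q : Set (EuclideanSpace ℝ (Fin d)))
    (hPne : P.Nonempty) (hQne : Q.Nonempty)
    (hPc : IsCompact P) (hQc : IsCompact Q)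
    (hPconv : Convex ℝ P) (hQconv : Convex ℝ Q) :
    ConvexOn ℝ ((Set.Ioi (0 : ℝ)) ×ˢ (Set.univ : Set (EuclideanSpace ℝ (Fin d))))
      (fun ac : ℝ × EuclideanSpace ℝ (Fin d) =>
        Metric.hausdorffDist ((fun p => ac.1 • p + ac.2) '' P) Q) := by
  have homothet_bounded : ∀ (α : ℝ) c, Bornology.IsBounded ((fun p => α • p + c) '' P) :=
    fun α c => (hPc.image (by fun_prop)).isBounded
  refine ⟨(convex_Ioi 0).prod convex_univ, ?_⟩
  rintro ⟨α₁, c₁⟩ ⟨hα₁, -⟩ ⟨α₂, c₂⟩ ⟨hα₂, -⟩ t s ht hs hts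
  simp only [Prod.smul_mk, Prod.mk_add_mk, smul_eq_mul]
  rw [hPconv.image_homothety_add_smul (le_of_lt hα₁) (le_of_lt hα₂) ht hs]
  exact hausdorffDist_add_smul_le (hPne.image _) (hPne.image _) hQne (homothet_bounded α₁ c₁)
    (homothet_bounded α₂ c₂) hQc.isBounded hQconv ht hs hts
end
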